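/- arXiv:2410.23206 — 5 statements merged into one kernel-verified Lean document; each statement's English description precedes it below -/
import Mathlib

section
/- For integers n ≥ 2, 0 ≤ d ≤ n and 1 ≤ k ≤ n-1, the number of signed permutations in 𝔅_n with d type B descents and first letter -k satisfies the recurrence B_{n,d,-k} = (2d-1)·B_{n-1,d,-k} + (2(n-d)+1)·B_{n-1,d-1,-k}, with the convention that B_{n-1,-1,-k} = 0. -/
open Finset Polynomial

/-- A signed permutation in the hyperoctahedral group `𝔅_n` is modelled by a permutation of
`Fin n` together with a sign vector.  `sval p i` is the value `π_i = π(i)` of the associated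
bijection of `{-n,…,-1,1,…,n}` (with `π(-i) = -π(i)` and the convention `π_0 = 0`). -/
def sval {n : ℕ} (p : Equiv.Perm (Fin n) × (Fin n → Bool)) (i : ℤ) : ℤ :=
  if h : 1 ≤ i ∧ i ≤ (n : ℤ) then
    (if p.2 ⟨(i - 1).toNat, by omega⟩ then -1 else 1) *
      (((p.1 ⟨(i - 1).toNat, by omega⟩ : Fin n) : ℕ) + 1)
  else if h' : 1 ≤ -i ∧ -i ≤ (n : ℤ) then
    -((if p.2 ⟨(-i - 1).toNat, by omega⟩ then -1 else 1) *
      (((p.1 ⟨(-i - 1).toNat, by omega⟩ : Fin n) : ℕ) + 1))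
  else 0

/-- The type B descent number `des_B(π) = |{i ∈ {0,…,n-1} : π_i > π_{i+1}}|` (with `π_0 = 0`). -/
def desB {n : ℕ} (p : Equiv.Perm (Fin n) × (Fin n → Bool)) : ℕ :=
  (Finset.univ.filter (fun i : Fin n =>
    sval p (((i : ℕ) : ℤ) + 1) < sval p ((i : ℕ) : ℤ))).card

/-- The type B excedance number
`exc_B(π) = |{i ∈ [n] : π(|π(i)|) > π(i) or π(i) = -i}|`. -/
def excB {n : ℕ} (p : Equiv.Perm (Fin n) × (Fin n → Bool)) : ℕ :=
  (Finset.univ.filter (fun i : Fin n =>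
    sval p (((i : ℕ) : ℤ) + 1) < sval p |sval p (((i : ℕ) : ℤ) + 1)| ∨
      sval p (((i : ℕ) : ℤ) + 1) = -(((i : ℕ) : ℤ) + 1))).card

/-- The restricted type B Eulerian polynomial `B_{n,k}(t) = ∑_{π ∈ 𝔅_n, π_1 = k} t^{des_B(π)}`. -/
noncomputable def Bpoly (n : ℕ) (k : ℤ) : Polynomial ℚ :=
  ∑ p ∈ Finset.univ.filter
      (fun p : Equiv.Perm (Fin n) × (Fin n → Bool) => sval p 1 = k),
    Polynomial.X ^ desB p

/-- `BE_{n,k}(t) = ∑_{π ∈ 𝔅_n, π_1 = k} t^{exc_B(π)}`. -/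
noncomputable def BEpoly (n : ℕ) (k : ℤ) : Polynomial ℚ :=
  ∑ p ∈ Finset.univ.filter
      (fun p : Equiv.Perm (Fin n) × (Fin n → Bool) => sval p 1 = k),
    Polynomial.X ^ excB p

/-- `B_{n,d,k}`: the number of signed permutations in `𝔅_n` with `d` type B descents and
first letter `k`. -/
def Bcount (n : ℕ) (d : ℕ) (k : ℤ) : ℕ :=
  (Finset.univ.filter (fun p : Equiv.Perm (Fin n) × (Fin n → Bool) =>
    desB p = d ∧ sval p 1 = k)).card

/-- `wd w m` is the `m`-th letter of the word `w` (1-indexed), with `wd w 0 = 0`. -/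
def wd {n : ℕ} (w : Fin n → ℤ) (m : ℕ) : ℤ :=
  if h : 1 ≤ m ∧ m ≤ n then w ⟨m - 1, by omega⟩ else 0

/-- descent count of a word (with a 0 prepended). -/
def dcN {n : ℕ} (w : Fin n → ℤ) : ℕ :=
  ∑ i ∈ Finset.range n, if wd w (i + 1) < wd w i then 1 else 0

def isValid (n : ℕ) (w : Fin n → ℤ) : Prop :=
  (∀ i, 1 ≤ |w i| ∧ |w i| ≤ (n : ℤ)) ∧ Function.Injective fun i => |w i|

noncomputable instance : ∀ (n : ℕ) (w : Fin n → ℤ), Decidable (isValid n w) :=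
  fun _ _ => Classical.dec _

noncomputable def Wset (n d : ℕ) (k : ℤ) : Finset (Fin n → ℤ) :=
  (Fintype.piFinset fun _ : Fin n => Finset.Icc (-(n:ℤ)) n).filter
    (fun w => isValid n w ∧ dcN w = d ∧ wd w 1 = k)

def word {n : ℕ} (p : Equiv.Perm (Fin n) × (Fin n → Bool)) : Fin n → ℤ :=
  fun i => (if p.2 i then -1 else 1) * (((p.1 i : Fin n) : ℕ) + 1)

lemma sval_eq_wd {n : ℕ} (p : Equiv.Perm (Fin n) × (Fin n → Bool)) (m : ℕ) :
    sval p (m : ℤ) = wd (word p) m := by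
  unfold sval wd word
  by_cases h : 1 ≤ m ∧ m ≤ n
  · rw [dif_pos (by exact_mod_cast h), dif_pos h]
    have : ((m : ℤ) - 1).toNat = m - 1 := by omega
    simp [this]
  · rw [dif_neg (by exact_mod_cast h), dif_neg h, dif_neg (by omega)]

lemma desB_eq_dcN {n : ℕ} (p : Equiv.Perm (Fin n) × (Fin n → Bool)) :
    desB p = dcN (word p) := by
  unfold desB dcN
  rw [Finset.card_filter, ← Fin.sum_univ_eq_sum_range]
  refine Finset.sum_congr rfl fun i _ => ?_
  rw [← sval_eq_wd, ← sval_eq_wd]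
  norm_cast

lemma abs_word {n : ℕ} (p : Equiv.Perm (Fin n) × (Fin n → Bool)) (i : Fin n) :
    |word p i| = ((p.1 i : ℕ) : ℤ) + 1 := by
  have h0 : (0:ℤ) ≤ ((p.1 i : ℕ) : ℤ) := by positivity
  by_cases h : p.2 i <;>
    simp only [word, h, if_true, if_false, neg_mul, one_mul, Bool.false_eq_true]
  · rw [abs_neg, abs_of_nonneg (by omega)]
  · rw [abs_of_nonneg (by omega)]

lemma bcount_eq_card_Wset (n d : ℕ) (k : ℤ) : Bcount n d k = (Wset n d k).card := by
  unfold Bcount Wset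
  apply Finset.card_bij (fun p _ => word p)
  · rintro p hp
    simp only [Finset.mem_filter, Finset.mem_univ, true_and] at hp ⊢
    refine ⟨?_, ⟨fun i => ?_, fun i j hij => ?_⟩, ?_, ?_⟩
    · rw [Fintype.mem_piFinset]
      intro i
      rw [Finset.mem_Icc]
      have h1 := abs_word p i
      have h2 := (p.1 i).isLt
      have h3 := abs_le.mp (le_of_eq h1)
      constructor <;> omega
    · rw [abs_word]; have := (p.1 i).isLt; omega
    · simp only [abs_word] at hij
      have : p.1 i = p.1 j := by
        apply Fin.val_injective; omega
      exact p.1.injective this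
    · rw [← desB_eq_dcN]; exact hp.1
    · rw [← sval_eq_wd (m := 1)]; exact_mod_cast hp.2
  · rintro p hp q hq hpq
    have habs : ∀ i, |word p i| = |word q i| := fun i => by rw [hpq]
    have hperm : p.1 = q.1 := by
      apply Equiv.ext; intro i
      have := habs i; rw [abs_word, abs_word] at this
      apply Fin.val_injective; omega
    have hsign : p.2 = q.2 := by
      funext i
      have hi := congrFun hpq i
      unfold word at hi
      have h1 : (0:ℤ) ≤ ((q.1 i : ℕ) : ℤ) := by positivity
      rw [hperm] at hi
      rcases Bool.eq_false_or_eq_true (p.2 i) with hp2 | hp2 <;>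
        rcases Bool.eq_false_or_eq_true (q.2 i) with hq2 | hq2 <;>
          rw [hp2, hq2] at hi ⊢ <;>
          simp only [if_true, if_false, Bool.false_eq_true, neg_mul, one_mul] at hi ⊢ <;>
          omega
    exact Prod.ext hperm hsign
  · rintro w hw
    simp only [Finset.mem_filter, Finset.mem_univ, true_and] at hw
    obtain ⟨hpi, ⟨hb, hinj⟩, hdc, hw1⟩ := hw
    have hf : ∀ i : Fin n, (|w i| - 1).toNat < n := fun i => by
      have := hb i; omega
    set f : Fin n → Fin n := fun i => ⟨(|w i| - 1).toNat, hf i⟩ with hfdef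
    have hfinj : Function.Injective f := by
      intro i j hij
      apply hinj
      simp only [hfdef, Fin.mk.injEq] at hij
      have hi := hb i; have hj := hb j
      simp only []
      omega
    have hfbij : Function.Bijective f := (Finite.injective_iff_bijective).mp hfinj
    set q : Equiv.Perm (Fin n) × (Fin n → Bool) :=
      (Equiv.ofBijective f hfbij, fun i => decide (w i < 0)) with hq
    have hword : word q = w := by
      funext i
      unfold word
      simp only [hq, Equiv.ofBijective_apply, hfdef]
      have := hb i
      by_cases h : w i < 0
      · rw [if_pos (by simpa using h)]
        have : |w i| = -w i := abs_of_neg h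
        push_cast; omega
      · rw [if_neg (by simpa using h)]
        have : |w i| = w i := abs_of_nonneg (by omega)
        push_cast; omega
    refine ⟨q, ?_, hword⟩
    simp only [Finset.mem_filter, Finset.mem_univ, true_and]
    constructor
    · rw [desB_eq_dcN, hword]; exact hdc
    · have := sval_eq_wd q 1
      rw [hword] at this
      exact_mod_cast this.trans hw1

/-- insert `x` at position `j` (0-indexed) -/
def ins {m : ℕ} (j : Fin (m + 1)) (x : ℤ) (w : Fin m → ℤ) : Fin (m + 1) → ℤ :=
  fun i => if h : i.val < j.val then w ⟨i.val, by omega⟩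
    else if h2 : i.val = j.val then x
    else w ⟨i.val - 1, by have := i.isLt; omega⟩

lemma wd_eq {n : ℕ} (w : Fin n → ℤ) (t : ℕ) (h : t < n) : wd w (t + 1) = w ⟨t, h⟩ := by
  unfold wd
  rw [dif_pos ⟨by omega, by omega⟩]
  congr 1

lemma wd_zero {n : ℕ} (w : Fin n → ℤ) : wd w 0 = 0 := by simp [wd]

lemma wd_ins_le {m : ℕ} (j : Fin (m + 1)) (x : ℤ) (w : Fin m → ℤ) (t : ℕ)
    (h : t ≤ j.val) : wd (ins j x w) t = wd w t := by
  unfold wd ins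
  have hj := j.isLt
  by_cases h1 : 1 ≤ t ∧ t ≤ m
  · rw [dif_pos ⟨h1.1, by omega⟩, dif_pos (by omega : t - 1 < j.val), dif_pos h1]
  · rw [dif_neg (by omega), dif_neg h1]

lemma wd_ins_self {m : ℕ} (j : Fin (m + 1)) (x : ℤ) (w : Fin m → ℤ) :
    wd (ins j x w) (j.val + 1) = x := by
  unfold wd ins
  have hj := j.isLt
  rw [dif_pos (by omega)]
  simp only []
  rw [dif_neg (by omega), dif_pos (by omega)]

lemma wd_ins_gt {m : ℕ} (j : Fin (m + 1)) (x : ℤ) (w : Fin m → ℤ) (t : ℕ)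
    (h : j.val + 2 ≤ t) (h2 : t ≤ m + 1) : wd (ins j x w) t = wd w (t - 1) := by
  unfold wd ins
  have hj := j.isLt
  rw [dif_pos (by omega)]
  simp only [Fin.val_mk]
  rw [dif_neg (by omega), dif_neg (by omega), dif_pos (by omega)]

lemma sum_range_add' {M : Type*} [AddCommMonoid M] (f : ℕ → M) (a b : ℕ) :
    ∑ i ∈ range (a + b), f i = (∑ i ∈ range a, f i) + ∑ i ∈ range b, f (a + i) := by
  induction b with
  | zero => simp
  | succ b ih => rw [← Nat.add_assoc, Finset.sum_range_succ, ih, Finset.sum_range_succ,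
      add_assoc]

/-- key descent-count relation for insertion -/
lemma dcN_ins {m : ℕ} (j : Fin (m + 1)) (x : ℤ) (w : Fin m → ℤ) :
    dcN (ins j x w) + (if j.val < m then (if wd w (j.val + 1) < wd w j.val then 1 else 0) else 0)
      = dcN w + (if x < wd w j.val then 1 else 0)
        + (if j.val < m then (if wd w (j.val + 1) < x then 1 else 0) else 0) := by
  have hj := j.isLt
  set f : ℕ → ℕ := fun i => if wd (ins j x w) (i + 1) < wd (ins j x w) i then 1 else 0 with hfd
  set g : ℕ → ℕ := fun i => if wd w (i + 1) < wd w i then 1 else 0 with hgd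
  have hdf : dcN (ins j x w) = ∑ i ∈ range (m + 1), f i := rfl
  have hdg : dcN w = ∑ i ∈ range m, g i := rfl
  have hf : ∑ i ∈ range (m + 1), f i
      = ((∑ i ∈ range j.val, f i) + f j.val) + ∑ i ∈ range (m - j.val), f (j.val + 1 + i) := by
    rw [← Finset.sum_range_succ, ← sum_range_add']
    congr 2
    omega
  have hg : ∑ i ∈ range m, g i
      = (∑ i ∈ range j.val, g i) + ∑ i ∈ range (m - j.val), g (j.val + i) := by
    rw [← sum_range_add']
    congr 2
    omega
  have e1 : ∑ i ∈ range j.val, f i = ∑ i ∈ range j.val, g i := by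
    refine Finset.sum_congr rfl fun i hi => ?_
    rw [Finset.mem_range] at hi
    simp only [hfd, hgd]
    rw [wd_ins_le j x w (i + 1) (by omega), wd_ins_le j x w i (by omega)]
  have e2 : f j.val = if x < wd w j.val then 1 else 0 := by
    simp only [hfd]
    rw [wd_ins_self, wd_ins_le j x w j.val le_rfl]
  rw [hdf, hdg, hf, hg, e1, e2]
  by_cases hjm : j.val < m
  · have hmj : m - j.val = (m - j.val - 1) + 1 := by omega
    rw [if_pos hjm, if_pos hjm, hmj, Finset.sum_range_succ', Finset.sum_range_succ']
    have e3 : ∀ i ∈ range (m - j.val - 1),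
        f (j.val + 1 + (i + 1)) = g (j.val + (i + 1)) := by
      intro i hi
      rw [Finset.mem_range] at hi
      simp only [hfd, hgd]
      rw [wd_ins_gt j x w _ (by omega) (by omega), wd_ins_gt j x w _ (by omega) (by omega),
        show j.val + 1 + (i + 1) + 1 - 1 = j.val + (i + 1) + 1 from by omega,
        show j.val + 1 + (i + 1) - 1 = j.val + (i + 1) from by omega]
    rw [Finset.sum_congr rfl e3]
    have e4 : f (j.val + 1 + 0) = if wd w (j.val + 1) < x then 1 else 0 := by
      simp only [hfd, Nat.add_zero]
      rw [wd_ins_gt j x w (j.val + 1 + 1) (by omega) (by omega),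
        show j.val + 1 + 1 - 1 = j.val + 1 from by omega, wd_ins_self]
    have e5 : g (j.val + 0) = if wd w (j.val + 1) < wd w j.val then 1 else 0 := by
      simp only [hgd, Nat.add_zero]
    rw [e4, e5]
    ring
  · have hmj : m - j.val = 0 := by omega
    rw [if_neg hjm, if_neg hjm, hmj]
    simp only [Finset.range_zero, Finset.sum_empty, add_zero]

def xval (m : ℕ) (s : Bool) : ℤ := if s then -((m : ℤ) + 1) else (m : ℤ) + 1

lemma wd_bound {m : ℕ} (w : Fin m → ℤ) (hb : ∀ i, |w i| ≤ (m : ℤ)) (t : ℕ) :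
    |wd w t| ≤ (m : ℤ) := by
  unfold wd
  split_ifs with h
  · exact hb _
  · simp

/-- number of descents of the inserted word, `x = ±(m+1)`, at an interior position. -/
lemma dcN_ins_interior {m : ℕ} (j : Fin (m + 1)) (s : Bool) (w : Fin m → ℤ)
    (hb : ∀ i, |w i| ≤ (m : ℤ)) (hjm : j.val < m) :
    dcN (ins j (xval m s) w) + (if wd w (j.val + 1) < wd w j.val then 1 else 0)
      = dcN w + 1 := by
  have h := dcN_ins j (xval m s) w
  rw [if_pos hjm, if_pos hjm] at h
  have h1 := abs_le.mp (wd_bound w hb j.val)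
  have h2 := abs_le.mp (wd_bound w hb (j.val + 1))
  by_cases hs : s
  · simp only [xval, hs, if_true] at h ⊢
    rw [if_pos (show -((m:ℤ) + 1) < wd w j.val from by omega),
      if_neg (show ¬ (wd w (j.val + 1) < -((m:ℤ) + 1)) from by omega)] at h
    omega
  · simp only [xval, hs, if_false, Bool.false_eq_true] at h ⊢
    rw [if_neg (show ¬ ((m:ℤ) + 1 < wd w j.val) from by omega),
      if_pos (show wd w (j.val + 1) < (m:ℤ) + 1 from by omega)] at h
    omega

/-- at the last position. -/
lemma dcN_ins_last {m : ℕ} (s : Bool) (w : Fin m → ℤ)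
    (hb : ∀ i, |w i| ≤ (m : ℤ)) :
    dcN (ins (⟨m, by omega⟩ : Fin (m + 1)) (xval m s) w)
      = dcN w + (if s then 1 else 0) := by
  have h := dcN_ins (⟨m, by omega⟩ : Fin (m + 1)) (xval m s) w
  simp only [Fin.val_mk, lt_irrefl, if_false] at h
  have h1 := abs_le.mp (wd_bound w hb m)
  by_cases hs : s
  · simp only [xval, hs, if_true] at h ⊢
    rw [if_pos (show -((m:ℤ) + 1) < wd w m from by omega)] at h
    omega
  · simp only [xval, hs, if_false, Bool.false_eq_true] at h ⊢
    rw [if_neg (show ¬ ((m:ℤ) + 1 < wd w m) from by omega)] at h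
    omega

lemma sum_c {m : ℕ} (w : Fin m → ℤ) (hm : 1 ≤ m) (hc0 : wd w 1 < 0) :
    (∑ t ∈ range (m - 1), if wd w (t + 1 + 1) < wd w (t + 1) then 1 else 0) + 1
      = dcN w := by
  unfold dcN
  conv_rhs => rw [show range m = range ((m-1)+1) from by rw [Nat.sub_add_cancel hm]]
  rw [Finset.sum_range_succ']
  congr 1
  rw [if_pos (by rw [wd_zero]; simpa using hc0)]

lemma key_j {m d : ℕ} (w : Fin m → ℤ) (hb : ∀ i, |w i| ≤ (m : ℤ)) (hm : 1 ≤ m)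
    (G : Bool → ℕ → ℕ) (s : Bool) (j : Fin (m + 1))
    (hGi : ∀ t, 1 ≤ t → t < m → G s t
      = (if (if wd w (t + 1) < wd w t then 1 else 0) + d = dcN w + 1 then 1 else 0))
    (hGm : G s m = if dcN w + (if s then 1 else 0) = d then 1 else 0)
    (hG0 : G s 0 = 0) :
    (if 1 ≤ j.val ∧ dcN (ins j (xval m s) w) = d then 1 else 0) = G s j.val := by
  by_cases h1 : 1 ≤ j.val ∧ j.val < m
  · have hint := dcN_ins_interior j s w hb h1.2
    rw [hGi j.val h1.1 h1.2]
    by_cases hc : wd w (j.val + 1) < wd w j.val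
    · rw [if_pos hc] at hint ⊢
      split_ifs with h2 h3 <;> omega
    · rw [if_neg hc] at hint ⊢
      split_ifs with h2 h3 <;> omega
  · by_cases h2 : j.val = m
    · have hjm : j = (⟨m, by omega⟩ : Fin (m + 1)) := Fin.ext (by simpa using h2)
      rw [hjm]
      have hlast := dcN_ins_last s w hb
      rw [hlast]
      simp only [Fin.val_mk] at hGm ⊢
      rw [hGm]
      split_ifs with h3 h4 <;> omega
    · have hj0 : j.val = 0 := by have := j.isLt; omega
      rw [hj0, hG0, if_neg (by omega)]

lemma slot_card {m d : ℕ} (w : Fin m → ℤ) (hb : ∀ i, |w i| ≤ (m : ℤ)) (hm : 1 ≤ m) :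
    (Finset.univ.filter (fun z : Bool × Fin (m + 1) =>
        1 ≤ z.2.val ∧ dcN (ins z.2 (xval m z.1) w) = d)).card
      = 2 * (∑ t ∈ range (m - 1),
            if (if wd w (t + 1 + 1) < wd w (t + 1) then 1 else 0) + d = dcN w + 1 then 1 else 0)
        + (if dcN w + 1 = d then 1 else 0) + (if dcN w = d then 1 else 0) := by
  classical
  set G : Bool → ℕ → ℕ := fun s t =>
    if 1 ≤ t ∧ t < m then
      (if (if wd w (t + 1) < wd w t then 1 else 0) + d = dcN w + 1 then 1 else 0)
    else if t = m then (if dcN w + (if s then 1 else 0) = d then 1 else 0) else 0 with hG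
  have hkey : ∀ (s : Bool) (j : Fin (m + 1)),
      (if 1 ≤ j.val ∧ dcN (ins j (xval m s) w) = d then 1 else 0) = G s j.val := by
    intro s j
    refine key_j w hb hm G s j (fun t h1 h2 => ?_) ?_ ?_
    · simp only [hG]; rw [if_pos ⟨h1, h2⟩]
    · simp only [hG]; rw [if_neg (by omega)]; simp
    · simp only [hG]; rw [if_neg (by omega), if_neg (by omega)]
  rw [Finset.card_filter, Fintype.sum_prod_type, Fintype.sum_bool]
  simp only [hkey]
  rw [Fin.sum_univ_eq_sum_range (G true) (m + 1), Fin.sum_univ_eq_sum_range (G false) (m + 1)]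
  have hsum : ∀ s : Bool, ∑ t ∈ range (m + 1), G s t
      = (∑ t ∈ range (m - 1),
            if (if wd w (t + 1 + 1) < wd w (t + 1) then 1 else 0) + d = dcN w + 1 then 1 else 0)
        + (if dcN w + (if s then 1 else 0) = d then 1 else 0) := by
    intro s
    conv_lhs => rw [show range (m + 1) = range ((m - 1 + 1) + 1) from by congr 1; omega]
    rw [Finset.sum_range_succ, Finset.sum_range_succ']
    have h0 : G s 0 = 0 := by
      simp only [hG]; rw [if_neg (by omega), if_neg (by omega)]
    have hlast : G s (m - 1 + 1) = (if dcN w + (if s then 1 else 0) = d then 1 else 0) := by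
      simp only [hG]; rw [if_neg (by omega), if_pos (by omega)]
    rw [h0, hlast, add_zero]
    congr 1
    refine Finset.sum_congr rfl fun t ht => ?_
    rw [Finset.mem_range] at ht
    simp only [hG]; rw [if_pos ⟨by omega, by omega⟩]
  rw [hsum true, hsum false]
  simp only [if_true, Bool.false_eq_true, if_false, add_zero]
  omega

lemma slot_count_eq {m d : ℕ} (w : Fin m → ℤ) (hb : ∀ i, |w i| ≤ (m : ℤ)) (hm : 1 ≤ m)
    (hc0 : wd w 1 < 0) (he : dcN w = d) :
    (Finset.univ.filter (fun z : Bool × Fin (m + 1) =>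
        1 ≤ z.2.val ∧ dcN (ins z.2 (xval m z.1) w) = d)).card = 2 * d - 1 := by
  rw [slot_card w hb hm]
  have hS : (∑ t ∈ range (m - 1),
        if (if wd w (t + 1 + 1) < wd w (t + 1) then 1 else 0) + d = dcN w + 1 then 1 else 0)
      = ∑ t ∈ range (m - 1), if wd w (t + 1 + 1) < wd w (t + 1) then 1 else 0 := by
    refine Finset.sum_congr rfl fun t ht => ?_
    split_ifs <;> omega
  rw [hS, if_neg (show ¬(dcN w + 1 = d) from by omega), if_pos he]
  have := sum_c w hm hc0
  omega

lemma slot_count_succ {m d : ℕ} (w : Fin m → ℤ) (hb : ∀ i, |w i| ≤ (m : ℤ)) (hm : 1 ≤ m)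
    (hc0 : wd w 1 < 0) (he : dcN w + 1 = d) :
    (Finset.univ.filter (fun z : Bool × Fin (m + 1) =>
        1 ≤ z.2.val ∧ dcN (ins z.2 (xval m z.1) w) = d)).card = 2 * (m + 1 - d) + 1 := by
  rw [slot_card w hb hm]
  have hS : ∀ t, ((if (if wd w (t + 1 + 1) < wd w (t + 1) then 1 else 0) + d = dcN w + 1 then (1:ℕ) else 0))
      + (if wd w (t + 1 + 1) < wd w (t + 1) then 1 else 0) = 1 := by
    intro t
    split_ifs <;> omega
  have hsum2 : (∑ t ∈ range (m - 1),
        if (if wd w (t + 1 + 1) < wd w (t + 1) then 1 else 0) + d = dcN w + 1 then 1 else 0)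
      + (∑ t ∈ range (m - 1), if wd w (t + 1 + 1) < wd w (t + 1) then 1 else 0)
      = m - 1 := by
    rw [← Finset.sum_add_distrib]
    rw [Finset.sum_congr rfl fun t _ => hS t]
    simp
  rw [if_pos he, if_neg (show ¬(dcN w = d) from by omega)]
  have := sum_c w hm hc0
  omega

def emb {m : ℕ} (j : Fin (m + 1)) (i : Fin m) : Fin (m + 1) :=
  if i.val < j.val then ⟨i.val, by omega⟩ else ⟨i.val + 1, by have := i.isLt; omega⟩

lemma emb_ne {m : ℕ} (j : Fin (m + 1)) (i : Fin m) : emb j i ≠ j := by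
  unfold emb
  split_ifs with h <;> intro hh <;>
    (have := congrArg Fin.val hh; simp only [Fin.val_mk] at this; omega)

lemma emb_inj {m : ℕ} (j : Fin (m + 1)) : Function.Injective (emb j) := by
  intro a b hab
  have := congrArg Fin.val hab
  unfold emb at this
  apply Fin.val_injective
  split_ifs at this <;> simp only [Fin.val_mk] at this <;> omega

lemma ins_emb {m : ℕ} (j : Fin (m + 1)) (x : ℤ) (w' : Fin m → ℤ) (i : Fin m) :
    ins j x w' (emb j i) = w' i := by
  unfold emb
  by_cases h : i.val < j.val
  · rw [if_pos h]
    simp only [ins, Fin.val_mk]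
    rw [dif_pos h]
  · rw [if_neg h]
    simp only [ins, Fin.val_mk]
    rw [dif_neg (by omega), dif_neg (by omega)]
    exact congrArg w' (Fin.val_injective (by simp only [Fin.val_mk]; omega))

lemma ins_at {m : ℕ} (j : Fin (m + 1)) (x : ℤ) (w' : Fin m → ℤ) :
    ins j x w' j = x := by
  simp only [ins]
  rw [dif_neg (lt_irrefl _)]
  simp

lemma emb_surj {m : ℕ} (j : Fin (m + 1)) (i : Fin (m + 1)) (h : i ≠ j) :
    ∃ a : Fin m, emb j a = i := by
  have hv : i.val ≠ j.val := fun hh => h (Fin.val_injective hh)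
  have hj := j.isLt
  have hi := i.isLt
  by_cases hlt : i.val < j.val
  · refine ⟨⟨i.val, by omega⟩, ?_⟩
    unfold emb
    simp only [Fin.val_mk]
    rw [if_pos hlt]
  · refine ⟨⟨i.val - 1, by omega⟩, ?_⟩
    unfold emb
    simp only [Fin.val_mk]
    rw [if_neg (by omega)]
    apply Fin.val_injective
    simp only [Fin.val_mk]
    omega

lemma abs_xval (m : ℕ) (s : Bool) : |xval m s| = (m : ℤ) + 1 := by
  by_cases h : s
  · simp only [xval, h, if_true]
    rw [abs_neg]
    exact abs_of_nonneg (by positivity)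
  · simp only [xval, h, if_false, Bool.false_eq_true]
    exact abs_of_nonneg (by positivity)

lemma ins_abs_ne {m : ℕ} (j : Fin (m + 1)) (x : ℤ) (w' : Fin m → ℤ)
    (hb : ∀ i, |w' i| ≤ (m : ℤ)) (i : Fin (m + 1)) (h : i ≠ j) :
    |ins j x w' i| ≤ (m : ℤ) := by
  obtain ⟨a, ha⟩ := emb_surj j i h
  rw [← ha, ins_emb]
  exact hb a

lemma mem_Wset_iff {m d : ℕ} (kk : ℤ) (w : Fin m → ℤ) :
    w ∈ Wset m d kk ↔ (∀ i, -(m:ℤ) ≤ w i ∧ w i ≤ m) ∧ isValid m w ∧ dcN w = d ∧ wd w 1 = kk := by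
  unfold Wset
  rw [Finset.mem_filter, Fintype.mem_piFinset]
  constructor
  · rintro ⟨h1, h2, h3, h4⟩
    exact ⟨fun i => by simpa [Finset.mem_Icc] using h1 i, h2, h3, h4⟩
  · rintro ⟨h1, h2, h3, h4⟩
    exact ⟨fun i => by simp [Finset.mem_Icc]; exact h1 i, h2, h3, h4⟩

lemma ins_valid {m : ℕ} (j : Fin (m + 1)) (s : Bool) (w' : Fin m → ℤ)
    (hv : isValid m w') : isValid (m + 1) (ins j (xval m s) w') := by
  obtain ⟨hb, hinj⟩ := hv
  constructor
  · intro i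
    by_cases h : i = j
    · rw [h, ins_at, abs_xval]
      refine ⟨by omega, by push_cast; omega⟩
    · obtain ⟨a, ha⟩ := emb_surj j i h
      rw [← ha, ins_emb]
      have := hb a
      refine ⟨by omega, by push_cast; omega⟩
  · intro i1 i2 h12
    simp only at h12
    by_cases h1 : i1 = j <;> by_cases h2 : i2 = j
    · rw [h1, h2]
    · exfalso
      obtain ⟨a, ha⟩ := emb_surj j i2 h2
      rw [h1, ins_at, ← ha, ins_emb, abs_xval] at h12
      have := (hb a).2
      omega
    · exfalso
      obtain ⟨a, ha⟩ := emb_surj j i1 h1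
      rw [h2, ins_at, ← ha, ins_emb, abs_xval] at h12
      have := (hb a).2
      omega
    · obtain ⟨a, ha⟩ := emb_surj j i1 h1
      obtain ⟨b, hbb⟩ := emb_surj j i2 h2
      rw [← ha, ← hbb, ins_emb, ins_emb] at h12
      rw [← ha, ← hbb, hinj h12]

lemma ins_mem_iff {m d e : ℕ} (kk : ℤ) (j : Fin (m + 1)) (s : Bool) (w' : Fin m → ℤ)
    (hw' : w' ∈ Wset m e kk) (hj : 1 ≤ j.val) :
    ins j (xval m s) w' ∈ Wset (m + 1) d kk ↔ dcN (ins j (xval m s) w') = d := by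
  rw [mem_Wset_iff] at hw' ⊢
  obtain ⟨hbd, hv, hdc, hw1⟩ := hw'
  have hb' : ∀ i, |w' i| ≤ (m : ℤ) := fun i => abs_le.mpr (hbd i)
  constructor
  · exact fun h => h.2.2.1
  · intro h
    refine ⟨fun i => ?_, ins_valid j s w' hv, h, ?_⟩
    · by_cases hij : i = j
      · rw [hij, ins_at]
        have h2 : |xval m s| = (m:ℤ) + 1 := abs_xval m s
        have h3 := abs_le.mp (le_of_eq h2)
        constructor <;> push_cast <;> omega
      · have := abs_le.mp (ins_abs_ne j (xval m s) w' hb' i hij)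
        constructor <;> push_cast <;> omega
    · rw [wd_ins_le j (xval m s) w' 1 hj]
      exact hw1

lemma exists_deletion {m d : ℕ} (hm : 1 ≤ m) (kk : ℤ) (hkk : |kk| ≤ (m : ℤ))
    (w : Fin (m + 1) → ℤ) (hw : w ∈ Wset (m + 1) d kk) :
    ∃ (w' : Fin m → ℤ) (s : Bool) (j : Fin (m + 1)), 1 ≤ j.val ∧
      w' ∈ Wset m (dcN w') kk ∧ (dcN w' = d ∨ dcN w' + 1 = d) ∧ ins j (xval m s) w' = w := by
  rw [mem_Wset_iff] at hw
  obtain ⟨hbd, ⟨hb1, hinj⟩, hdc, hw1⟩ := hw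
  have hb1' : ∀ i, 1 ≤ |w i| ∧ |w i| ≤ (m : ℤ) + 1 := fun i => by
    have := hb1 i; push_cast at this; exact this
  have hfj : ∀ i : Fin (m + 1), (|w i| - 1).toNat < m + 1 := fun i => by
    have := hb1' i; omega
  set g : Fin (m + 1) → Fin (m + 1) := fun i => ⟨(|w i| - 1).toNat, hfj i⟩ with hg
  have hginj : Function.Injective g := by
    intro a b hab
    apply hinj
    have := congrArg Fin.val hab
    simp only [hg, Fin.val_mk] at this
    have ha := (hb1' a).1; have hb := (hb1' b).1
    simp only
    omega
  obtain ⟨j, hj⟩ := Finite.injective_iff_surjective.mp hginj ⟨m, by omega⟩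
  have hwj : |w j| = (m : ℤ) + 1 := by
    have := congrArg Fin.val hj
    simp only [hg, Fin.val_mk] at this
    have := (hb1' j).1
    omega
  have hwd1 : wd w 1 = w ⟨0, by omega⟩ := wd_eq w 0 (by omega)
  have hj1 : 1 ≤ j.val := by
    by_contra h
    have hj0 : j = ⟨0, by omega⟩ := Fin.val_injective (by simp only [Fin.val_mk]; omega)
    rw [hj0] at hwj
    rw [hwd1] at hw1
    rw [← hw1] at hkk
    rw [hwj] at hkk
    omega
  set s : Bool := decide (w j < 0) with hs
  have hxs : xval m s = w j := by
    rcases (abs_eq (by positivity : (0:ℤ) ≤ (m : ℤ) + 1)).mp hwj with h | h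
    · have hsf : s = false := by
        rw [hs]; simp only [decide_eq_false_iff_not]; omega
      rw [hsf]; simp only [xval, Bool.false_eq_true, if_false]; omega
    · have hst : s = true := by
        rw [hs]; simp only [decide_eq_true_eq]; omega
      rw [hst]; simp only [xval, if_true]; omega
  set w' : Fin m → ℤ := fun i => w (emb j i) with hw'
  have hins : ins j (xval m s) w' = w := by
    funext i
    by_cases h : i = j
    · rw [h, ins_at, hxs]
    · obtain ⟨a, ha⟩ := emb_surj j i h
      rw [← ha, ins_emb]
  have hb' : ∀ i, 1 ≤ |w' i| ∧ |w' i| ≤ (m : ℤ) := by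
    intro i
    have h1 := hb1' (emb j i)
    have hne : |w (emb j i)| ≠ (m : ℤ) + 1 := by
      intro hh
      have hE : |w (emb j i)| = |w j| := hh.trans hwj.symm
      exact emb_ne j i (hinj hE)
    have hwi : w' i = w (emb j i) := rfl
    rw [hwi]
    omega
  have hw'mem : w' ∈ Wset m (dcN w') kk := by
    rw [mem_Wset_iff]
    refine ⟨fun i => abs_le.mp (hb' i).2, ⟨hb', fun a b hab => ?_⟩, rfl, ?_⟩
    · simp only [hw'] at hab
      exact emb_inj j (hinj hab)
    · have hemb0 : emb j ⟨0, by omega⟩ = ⟨0, by omega⟩ := by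
        unfold emb
        simp only [Fin.val_mk]
        rw [if_pos (by omega)]
      rw [wd_eq w' 0 (by omega)]
      have hx : w' ⟨0, by omega⟩ = w (emb j ⟨0, by omega⟩) := rfl
      rw [hx, hemb0]
      rw [hwd1] at hw1
      exact hw1
  have hbabs : ∀ i, |w' i| ≤ (m : ℤ) := fun i => (hb' i).2
  have hdisj : dcN w' = d ∨ dcN w' + 1 = d := by
    by_cases hjm : j.val < m
    · have hrel := dcN_ins_interior j s w' hbabs hjm
      rw [hins] at hrel
      have hc : (if wd w' (j.val + 1) < wd w' j.val then (1:ℕ) else 0) ≤ 1 := by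
        split_ifs <;> omega
      omega
    · have hjm' : j = ⟨m, by omega⟩ :=
        Fin.val_injective (by simp only [Fin.val_mk]; have := j.isLt; omega)
      have hrel := dcN_ins_last s w' hbabs
      rw [← hjm', hins] at hrel
      have hc : (if s then (1:ℕ) else 0) ≤ 1 := by split_ifs <;> omega
      omega
  exact ⟨w', s, j, hj1, hw'mem, hdisj, hins⟩

lemma dcN_pos {n : ℕ} (w : Fin n → ℤ) (hn : 1 ≤ n) (hc0 : wd w 1 < 0) : 1 ≤ dcN w := by
  unfold dcN
  have h0 : (if wd w (0 + 1) < wd w 0 then (1:ℕ) else 0) = 1 := by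
    rw [wd_zero, if_pos (by simpa using hc0)]
  have := Finset.single_le_sum
    (f := fun i => if wd w (i + 1) < wd w i then (1:ℕ) else 0)
    (fun i _ => Nat.zero_le _) (Finset.mem_range.mpr hn)
  have h2 : (if wd w (0 + 1) < wd w 0 then (1:ℕ) else 0)
      ≤ ∑ i ∈ Finset.range n, if wd w (i + 1) < wd w i then (1:ℕ) else 0 := this
  omega

lemma bcount_zero (n : ℕ) (k : ℕ) (hn : 1 ≤ n) (hk : 1 ≤ k) :
    Bcount n 0 (-(k : ℤ)) = 0 := by
  rw [bcount_eq_card_Wset, Finset.card_eq_zero]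
  rw [Finset.eq_empty_iff_forall_notMem]
  intro w hw
  rw [mem_Wset_iff] at hw
  obtain ⟨_, _, hdc, hw1⟩ := hw
  have : wd w 1 < 0 := by rw [hw1]; simp; omega
  have := dcN_pos w hn this
  omega

lemma main_count {m d k : ℕ} (hm : 1 ≤ m) (hk1 : 1 ≤ k) (hk2 : k ≤ m) (hd1 : 1 ≤ d) :
    (Wset (m + 1) d (-(k : ℤ))).card
      = (2 * d - 1) * (Wset m d (-(k : ℤ))).card
        + (2 * (m + 1 - d) + 1) * (Wset m (d - 1) (-(k : ℤ))).card := by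
  classical
  set kk : ℤ := -(k : ℤ) with hkkdef
  have hkk : |kk| ≤ (m : ℤ) := by
    rw [hkkdef, abs_neg, Nat.abs_cast]
    exact_mod_cast hk2
  have hkkneg : kk < 0 := by rw [hkkdef]; omega
  set U : Finset (Fin m → ℤ) := Wset m d kk ∪ Wset m (d - 1) kk with hU
  set Dom : Finset ((Fin m → ℤ) × Bool × Fin (m + 1)) :=
    (U ×ˢ (Finset.univ : Finset (Bool × Fin (m + 1)))).filter
      (fun z => 1 ≤ z.2.2.val ∧ ins z.2.2 (xval m z.2.1) z.1 ∈ Wset (m + 1) d kk) with hDom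
  have hbU : ∀ w' ∈ U, ∀ i, |w' i| ≤ (m : ℤ) := by
    intro w' hw' i
    rcases Finset.mem_union.mp hw' with h | h <;>
      · rw [mem_Wset_iff] at h
        exact abs_le.mpr (h.1 i)
  -- step 1 : bijection
  have h1 : (Wset (m + 1) d kk).card = Dom.card := by
    symm
    apply Finset.card_bij (fun z _ => ins z.2.2 (xval m z.2.1) z.1)
    · intro z hz
      exact ((Finset.mem_filter.mp hz).2).2
    · rintro ⟨w1, s1, j1⟩ hz1 ⟨w2, s2, j2⟩ hz2 heq
      simp only at heq
      obtain ⟨hz1p, _, _⟩ := Finset.mem_filter.mp hz1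
      obtain ⟨hz2p, _, _⟩ := Finset.mem_filter.mp hz2
      have hw1U : w1 ∈ U := (Finset.mem_product.mp hz1p).1
      have hw2U : w2 ∈ U := (Finset.mem_product.mp hz2p).1
      have hj12 : j1 = j2 := by
        by_contra hne
        have hq := congrFun heq j1
        rw [ins_at] at hq
        have hle := ins_abs_ne j2 (xval m s2) w2 (hbU w2 hw2U) j1 hne
        rw [← hq, abs_xval] at hle
        omega
      have hs12 : s1 = s2 := by
        have hq := congrFun heq j1
        rw [ins_at, hj12, ins_at] at hq
        by_cases h1' : s1 <;> by_cases h2' : s2 <;>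
          simp only [xval, h1', h2', if_true, if_false, Bool.false_eq_true] at hq ⊢ <;>
          omega
      have hw12 : w1 = w2 := by
        funext a
        have hq := congrFun heq (emb j1 a)
        rw [ins_emb, hj12, ins_emb] at hq
        exact hq
      simp only [Prod.mk.injEq]
      exact ⟨hw12, hs12, hj12⟩
    · intro w hw
      obtain ⟨w', s, j, hj1, hw'mem, hdisj, hins⟩ := exists_deletion hm kk hkk w hw
      refine ⟨(w', s, j), ?_, hins⟩
      rw [hDom, Finset.mem_filter]
      refine ⟨Finset.mem_product.mpr ⟨?_, Finset.mem_univ _⟩, hj1, by rw [hins]; exact hw⟩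
      rcases hdisj with h | h
      · rw [h] at hw'mem
        exact Finset.mem_union_left _ hw'mem
      · have hde : dcN w' = d - 1 := by omega
        rw [hde] at hw'mem
        exact Finset.mem_union_right _ hw'mem
  -- step 2 : Dom.card as a sum over U
  have h2 : Dom.card = ∑ w' ∈ U, (Finset.univ.filter (fun z : Bool × Fin (m + 1) =>
      1 ≤ z.2.val ∧ dcN (ins z.2 (xval m z.1) w') = d)).card := by
    rw [hDom, Finset.card_filter, Finset.sum_product]
    refine Finset.sum_congr rfl fun w' hw' => ?_
    rw [Finset.card_filter]
    refine Finset.sum_congr rfl fun y _ => ?_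
    by_cases hj : 1 ≤ y.2.val
    · have he : ∃ e, w' ∈ Wset m e kk := by
        rcases Finset.mem_union.mp hw' with h | h
        exacts [⟨d, h⟩, ⟨d - 1, h⟩]
      obtain ⟨e, hwe⟩ := he
      have hiff := ins_mem_iff (d := d) kk y.2 y.1 w' hwe hj
      simp only [hiff]
    · rw [if_neg (fun hc => hj hc.1), if_neg (fun hc => hj hc.1)]
  -- step 3 : evaluate the sum
  have hdisjU : Disjoint (Wset m d kk) (Wset m (d - 1) kk) := by
    rw [Finset.disjoint_left]
    intro a ha hb
    rw [mem_Wset_iff] at ha hb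
    have h1' := ha.2.2.1
    have h2' := hb.2.2.1
    omega
  rw [h1, h2, hU, Finset.sum_union hdisjU]
  have hA : ∀ w' ∈ Wset m d kk, (Finset.univ.filter (fun z : Bool × Fin (m + 1) =>
      1 ≤ z.2.val ∧ dcN (ins z.2 (xval m z.1) w') = d)).card = 2 * d - 1 := by
    intro w' hw'
    have hmem := (mem_Wset_iff kk w').mp hw'
    exact slot_count_eq w' (fun i => abs_le.mpr (hmem.1 i)) hm
      (by rw [hmem.2.2.2]; exact hkkneg) hmem.2.2.1
  have hB : ∀ w' ∈ Wset m (d - 1) kk, (Finset.univ.filter (fun z : Bool × Fin (m + 1) =>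
      1 ≤ z.2.val ∧ dcN (ins z.2 (xval m z.1) w') = d)).card = 2 * (m + 1 - d) + 1 := by
    intro w' hw'
    have hmem := (mem_Wset_iff kk w').mp hw'
    exact slot_count_succ w' (fun i => abs_le.mpr (hmem.1 i)) hm
      (by rw [hmem.2.2.2]; exact hkkneg) (by omega)
  rw [Finset.sum_congr rfl hA, Finset.sum_congr rfl hB, Finset.sum_const, Finset.sum_const,
    smul_eq_mul, smul_eq_mul]
  ring

/-- For `n ≥ 2`, `0 ≤ d ≤ n`, `1 ≤ k ≤ n-1`:
`B_{n,d,-k} = (2d-1)·B_{n-1,d,-k} + (2(n-d)+1)·B_{n-1,d-1,-k}`,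
with the convention `B_{n-1,-1,-k} = 0` (the `if d = 0` clause). -/
theorem stmt13 (n d k : ℕ) (hn : 2 ≤ n) (hd : d ≤ n) (hk1 : 1 ≤ k) (hk2 : k ≤ n - 1) :
    (Bcount n d (-(k : ℤ)) : ℤ) =
      (2 * (d : ℤ) - 1) * (Bcount (n - 1) d (-(k : ℤ)) : ℤ) +
        (2 * ((n : ℤ) - (d : ℤ)) + 1) *
          (if d = 0 then 0 else (Bcount (n - 1) (d - 1) (-(k : ℤ)) : ℤ)) := by
  by_cases hd0 : d = 0
  · subst hd0
    rw [if_pos rfl, bcount_zero n k (by omega) hk1, bcount_zero (n - 1) k (by omega) hk1]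
    simp
  · rw [if_neg hd0]
    have hd1 : 1 ≤ d := by omega
    have hm : 1 ≤ n - 1 := by omega
    have key := main_count (m := n - 1) (d := d) (k := k) hm hk1 hk2 hd1
    rw [show n - 1 + 1 = n from by omega] at key
    rw [bcount_eq_card_Wset, bcount_eq_card_Wset, bcount_eq_card_Wset]
    have e1 : ((2 * d - 1 : ℕ) : ℤ) = 2 * (d : ℤ) - 1 := by omega
    have e2 : ((2 * (n - d) + 1 : ℕ) : ℤ) = 2 * ((n : ℤ) - (d : ℤ)) + 1 := by omega
    rw [key, Nat.cast_add, Nat.cast_mul, Nat.cast_mul, e1, e2]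
end

section
/- For integers n ≥ 3, 0 ≤ d ≤ n and 2 ≤ k ≤ n-1, the number of signed permutations in 𝔅_n with d type B excedances and fixed first letter satisfies the recurrences BE_{n,d,k} = (2d-1)·BE_{n-1,d,k} + (2(n-d)+1)·BE_{n-1,d-1,k} and BE_{n,d,-k} = (2d+1)·BE_{n-1,d,-k} + (2(n-d-1)+1)·BE_{n-1,d-1,-k}, with the convention that BE_{n-1,-1,±k} = 0. -/
open Finset Polynomial

/-- `BE_{n,d,k}`: the number of signed permutations in `𝔅_n` with `d` type B excedances and
first letter `k`. -/
def BEcount (n : ℕ) (d : ℕ) (k : ℤ) : ℕ :=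
  (Finset.univ.filter (fun p : Equiv.Perm (Fin n) × (Fin n → Bool) =>
    excB p = d ∧ sval p 1 = k)).card

namespace Stmt15aux

abbrev B (m : ℕ) := Equiv.Perm (Fin m) × (Fin m → Bool)

variable {m : ℕ}

def pos {N : ℕ} (p : B N) (a : Fin N) : ℤ :=
  (if p.2 a then -1 else 1) * (((p.1 a : ℕ) : ℤ) + 1)

lemma abs_pos {N : ℕ} (p : B N) (a : Fin N) : |pos p a| = ((p.1 a : ℕ) : ℤ) + 1 := by
  unfold pos
  split <;> rw [abs_mul] <;> simp <;> omega

lemma pos_bounds {N : ℕ} (p : B N) (a : Fin N) : 1 ≤ |pos p a| ∧ |pos p a| ≤ N := by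
  rw [abs_pos]
  have := (p.1 a).isLt
  omega

lemma sval_fin {N : ℕ} (p : B N) (a : Fin N) : sval p (((a : ℕ) : ℤ) + 1) = pos p a := by
  have h : (1 : ℤ) ≤ ((a : ℕ) : ℤ) + 1 ∧ ((a : ℕ) : ℤ) + 1 ≤ (N : ℤ) := by
    have := a.isLt; omega
  rw [sval, dif_pos h]
  have h2 : ((((a : ℕ) : ℤ) + 1) - 1).toNat = (a : ℕ) := by omega
  unfold pos
  congr 2 <;> simp [h2]

def EP {N : ℕ} (p : B N) (a : Fin N) : Prop :=
  pos p a < pos p (p.1 a) ∨ pos p a = -(((a : ℕ) : ℤ) + 1)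

instance {N : ℕ} (p : B N) : DecidablePred (EP p) := fun a => by
  unfold EP; infer_instance

lemma EP_iff {N : ℕ} (p : B N) (a : Fin N) :
    EP p a ↔ (sval p (((a : ℕ) : ℤ) + 1) < sval p |sval p (((a : ℕ) : ℤ) + 1)| ∨
      sval p (((a : ℕ) : ℤ) + 1) = -(((a : ℕ) : ℤ) + 1)) := by
  rw [sval_fin, abs_pos, sval_fin, EP]

lemma excB_eq {N : ℕ} (p : B N) : excB p = (univ.filter (EP p)).card := by
  unfold excB
  congr 1
  apply Finset.filter_congr
  intro a _
  exact (EP_iff p a).symm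

lemma sval_one {N : ℕ} (p : B N) (h : 0 < N) : sval p 1 = pos p ⟨0, h⟩ := by
  have := sval_fin p ⟨0, h⟩
  simpa using this


-- helpers
lemma pos_le {N : ℕ} (p : B N) (a : Fin N) : pos p a ≤ (N : ℤ) := by
  have h := le_abs_self (pos p a); rw [abs_pos] at h; have := (p.1 a).isLt; omega
lemma pos_ge {N : ℕ} (p : B N) (a : Fin N) : -(N : ℤ) ≤ pos p a := by
  have h := neg_abs_le (pos p a); rw [abs_pos] at h; have := (p.1 a).isLt; omega
lemma fix_of_pos_eq {N : ℕ} (p : B N) (a : Fin N) (h : pos p a = -(((a : ℕ) : ℤ) + 1)) :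
    p.1 a = a := by
  have h1 := abs_pos p a
  rw [h, abs_neg, abs_of_nonneg (by positivity)] at h1
  exact Fin.ext (by omega)
-- insertion (defs from chunk b, assumed)
def ext0 (σ : Equiv.Perm (Fin m)) : Equiv.Perm (Fin (m + 1)) :=
  Equiv.permCongr finSuccEquivLast.symm σ.optionCongr
@[simp] lemma ext0_castSucc (σ : Equiv.Perm (Fin m)) (a : Fin m) :
    ext0 σ a.castSucc = (σ a).castSucc := by
  simp [ext0, Equiv.permCongr_apply, finSuccEquivLast_castSucc, finSuccEquivLast_symm_some]
@[simp] lemma ext0_last (σ : Equiv.Perm (Fin m)) : ext0 σ (Fin.last m) = Fin.last m := by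
  simp [ext0, Equiv.permCongr_apply, finSuccEquivLast_last]
def Fσ (p : B m) (j : Fin (m + 1)) : Equiv.Perm (Fin (m + 1)) :=
  Equiv.swap (Fin.last m) (ext0 p.1 j) * ext0 p.1
def Fε (p : B m) (j : Fin (m + 1)) (s : Bool) : Fin (m + 1) → Bool := fun i =>
  if i = j then s
  else if hi : (i : ℕ) < m then p.2 ⟨i, hi⟩
  else if hj : (j : ℕ) < m then p.2 ⟨j, hj⟩ else s
def F (p : B m) (j : Fin (m + 1)) (s : Bool) : B (m + 1) := (Fσ p j, Fε p j s)
lemma Fσ_apply_j (p : B m) (j : Fin (m + 1)) : Fσ p j j = Fin.last m := by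
  simp [Fσ, Equiv.swap_apply_right]
lemma Fσ_castSucc (p : B m) (j : Fin (m + 1)) (a : Fin m) (h : a.castSucc ≠ j) :
    Fσ p j a.castSucc = (p.1 a).castSucc := by
  have h1 : (p.1 a).castSucc ≠ Fin.last m := (Fin.castSucc_lt_last _).ne
  have h2 : (p.1 a).castSucc ≠ ext0 p.1 j := by
    intro hc
    apply h
    have h3 : ext0 p.1 a.castSucc = ext0 p.1 j := by rw [ext0_castSucc, hc]
    exact (ext0 p.1).injective h3
  simp only [Fσ, Equiv.Perm.mul_apply, ext0_castSucc]
  exact Equiv.swap_apply_of_ne_of_ne h1 h2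
lemma Fσ_last (p : B m) (j : Fin (m + 1)) : Fσ p j (Fin.last m) = ext0 p.1 j := by
  simp [Fσ, Equiv.swap_apply_left]
lemma Fε_j (p : B m) (j : Fin (m + 1)) (s : Bool) : Fε p j s j = s := by simp [Fε]
lemma Fε_castSucc (p : B m) (j : Fin (m + 1)) (s : Bool) (a : Fin m) (h : a.castSucc ≠ j) :
    Fε p j s a.castSucc = p.2 a := by
  have ha : ((a.castSucc : Fin (m+1)) : ℕ) < m := by simp [a.isLt]
  simp only [Fε, if_neg h, dif_pos ha]
  congr 1
lemma Fε_last (p : B m) (j' : Fin m) (s : Bool) :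
    Fε p j'.castSucc s (Fin.last m) = p.2 j' := by
  have h : (Fin.last m) ≠ j'.castSucc := ((Fin.castSucc_lt_last _).ne).symm
  have hj : ((j'.castSucc : Fin (m+1)) : ℕ) < m := by simp [j'.isLt]
  have hl : ¬ ((Fin.last m : Fin (m+1)) : ℕ) < m := by simp
  simp only [Fε, if_neg h, dif_neg hl, dif_pos hj]
  congr 1
-- pos lemmas
lemma pos_F_castSucc (p : B m) (j : Fin (m + 1)) (s : Bool) (a : Fin m)
    (h : a.castSucc ≠ j) : pos (F p j s) a.castSucc = pos p a := by
  unfold pos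
  rw [show (F p j s).2 a.castSucc = p.2 a from Fε_castSucc p j s a h,
      show (F p j s).1 a.castSucc = (p.1 a).castSucc from Fσ_castSucc p j a h]
  simp
lemma pos_F_j (p : B m) (j : Fin (m + 1)) (s : Bool) :
    pos (F p j s) j = (if s then -1 else 1) * ((m : ℤ) + 1) := by
  unfold pos
  rw [show (F p j s).2 j = s from Fε_j p j s,
      show (F p j s).1 j = Fin.last m from Fσ_apply_j p j]
  simp
lemma pos_F_last (p : B m) (j' : Fin m) (s : Bool) :
    pos (F p j'.castSucc s) (Fin.last m) = pos p j' := by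
  unfold pos
  rw [show (F p j'.castSucc s).2 (Fin.last m) = p.2 j' from Fε_last p j' s,
      show (F p j'.castSucc s).1 (Fin.last m) = (p.1 j').castSucc by
        rw [show (F p j'.castSucc s).1 = Fσ p j'.castSucc from rfl, Fσ_last, ext0_castSucc]]
  simp

-- EP lemmas
lemma E1 (p : B m) (j' : Fin m) (s : Bool) (a : Fin m) (ha1 : a ≠ j') (ha2 : p.1 a ≠ j') :
    EP (F p j'.castSucc s) a.castSucc ↔ EP p a := by
  have h1 : a.castSucc ≠ j'.castSucc := by simpa [Fin.castSucc_inj] using ha1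
  have h2 : (p.1 a).castSucc ≠ j'.castSucc := by simpa [Fin.castSucc_inj] using ha2
  unfold EP
  rw [show (F p j'.castSucc s).1 a.castSucc = (p.1 a).castSucc from Fσ_castSucc p _ a h1,
      pos_F_castSucc p _ s a h1, pos_F_castSucc p _ s (p.1 a) h2]
  simp

lemma E2 (p : B m) (j' : Fin m) (s : Bool) (hne : p.1.symm j' ≠ j') :
    EP (F p j'.castSucc s) (p.1.symm j').castSucc ↔ s = false := by
  set i0 := p.1.symm j' with hi0
  have hpi : p.1 i0 = j' := p.1.apply_symm_apply j'
  have h1 : i0.castSucc ≠ j'.castSucc := by simpa [Fin.castSucc_inj] using hne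
  unfold EP
  rw [show (F p j'.castSucc s).1 i0.castSucc = j'.castSucc by
        rw [show (F p j'.castSucc s).1 = Fσ p j'.castSucc from rfl, Fσ_castSucc p _ i0 h1, hpi],
      pos_F_castSucc p _ s i0 h1, pos_F_j p j'.castSucc s]
  have hb1 := pos_le p i0
  have hb2 := pos_ge p i0
  simp only [Fin.coe_castSucc]
  cases s with
  | false =>
    simp only [Bool.false_eq_true, if_false]
    have : pos p i0 < (1:ℤ) * ((m:ℤ) + 1) := by omega
    simp [this] <;> omega
  | true =>
    simp only [if_true]
    have h3 : ¬ (pos p i0 < -1 * ((m:ℤ) + 1)) := by omega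
    have h4 : pos p i0 ≠ -(((i0 : ℕ) : ℤ) + 1) := by
      intro h
      exact hne (by rw [← hpi, fix_of_pos_eq p i0 h])
    simp [h3, h4] <;> omega

lemma E3 (p : B m) (j' : Fin m) (s : Bool) :
    EP (F p j'.castSucc s) j'.castSucc ↔ s = true := by
  unfold EP
  rw [show (F p j'.castSucc s).1 j'.castSucc = Fin.last m from Fσ_apply_j p _,
      pos_F_j p j'.castSucc s, pos_F_last p j' s]
  have hb1 := pos_le p j'
  have hb2 := pos_ge p j'
  have hj := j'.isLt
  simp only [Fin.coe_castSucc]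
  cases s with
  | true =>
    simp only [if_true]
    have : (-1 : ℤ) * ((m:ℤ) + 1) < pos p j' := by omega
    simp [this] <;> omega
  | false =>
    simp only [Bool.false_eq_true, if_false]
    have h3 : ¬ ((1:ℤ) * ((m:ℤ) + 1) < pos p j') := by omega
    have h4 : (1:ℤ) * ((m:ℤ) + 1) ≠ -(((j' : ℕ) : ℤ) + 1) := by omega
    simp [h3, h4] <;> omega

lemma E4 (p : B m) (j' : Fin m) (s : Bool) (hne : p.1 j' ≠ j') :
    EP (F p j'.castSucc s) (Fin.last m) ↔ EP p j' := by
  have h2 : (p.1 j').castSucc ≠ j'.castSucc := by simpa [Fin.castSucc_inj] using hne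
  unfold EP
  rw [show (F p j'.castSucc s).1 (Fin.last m) = (p.1 j').castSucc by
        rw [show (F p j'.castSucc s).1 = Fσ p j'.castSucc from rfl, Fσ_last, ext0_castSucc],
      pos_F_last p j' s, pos_F_castSucc p _ s (p.1 j') h2]
  have hb1 := pos_le p j'
  have hb2 := pos_ge p j'
  have hl : ((Fin.last m : Fin (m+1)) : ℕ) = m := rfl
  rw [hl]
  constructor
  · rintro (h | h)
    · exact Or.inl h
    · omega
  · rintro (h | h)
    · exact Or.inl h
    · exact absurd (fix_of_pos_eq p j' h) hne

lemma E5 (p : B m) (j' : Fin m) (s : Bool) (heq : p.1 j' = j') :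
    EP (F p j'.castSucc s) (Fin.last m) ↔ s = false := by
  unfold EP
  rw [show (F p j'.castSucc s).1 (Fin.last m) = j'.castSucc by
        rw [show (F p j'.castSucc s).1 = Fσ p j'.castSucc from rfl, Fσ_last, ext0_castSucc, heq],
      pos_F_last p j' s, pos_F_j p j'.castSucc s]
  have hb1 := pos_le p j'
  have hb2 := pos_ge p j'
  simp only [Fin.val_last]
  cases s with
  | false =>
    simp only [Bool.false_eq_true, if_false]
    have : pos p j' < (1:ℤ) * ((m:ℤ) + 1) := by omega
    simp [this] <;> omega
  | true =>
    simp only [if_true]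
    have h3 : ¬ (pos p j' < -1 * ((m:ℤ) + 1)) := by omega
    have h4 : pos p j' ≠ -(((m : ℕ) : ℤ) + 1) := by omega
    simp [h3, h4] <;> omega

lemma E7 (p : B m) (s : Bool) (a : Fin m) :
    EP (F p (Fin.last m) s) a.castSucc ↔ EP p a := by
  have h1 : a.castSucc ≠ Fin.last m := (Fin.castSucc_lt_last _).ne
  have h2 : (p.1 a).castSucc ≠ Fin.last m := (Fin.castSucc_lt_last _).ne
  unfold EP
  rw [show (F p (Fin.last m) s).1 a.castSucc = (p.1 a).castSucc from Fσ_castSucc p _ a h1,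
      pos_F_castSucc p _ s a h1, pos_F_castSucc p _ s (p.1 a) h2]
  simp

lemma E8 (p : B m) (s : Bool) :
    EP (F p (Fin.last m) s) (Fin.last m) ↔ s = true := by
  unfold EP
  rw [show (F p (Fin.last m) s).1 (Fin.last m) = Fin.last m by
        rw [show (F p (Fin.last m) s).1 = Fσ p (Fin.last m) from rfl, Fσ_last, ext0_last],
      pos_F_j p (Fin.last m) s]
  simp only [Fin.val_last]
  cases s with
  | true =>
    simp only [if_true]
    have : (-1 : ℤ) * ((m:ℤ) + 1) = -(((m:ℕ):ℤ) + 1) := by ring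
    simp [this] <;> omega
  | false =>
    simp only [Bool.false_eq_true, if_false]
    have h3 : ¬ ((1:ℤ) * ((m:ℤ) + 1) < 1 * ((m:ℤ) + 1)) := by omega
    have h4 : (1:ℤ) * ((m:ℤ) + 1) ≠ -(((m : ℕ) : ℤ) + 1) := by omega
    simp [h3, h4] <;> omega

lemma X1 (p : B m) (s : Bool) :
    excB (F p (Fin.last m) s) = excB p + (if s then 1 else 0) := by
  rw [excB_eq, excB_eq, Finset.card_filter, Finset.card_filter, Fin.sum_univ_castSucc]
  congr 1
  · apply Finset.sum_congr rfl
    intro a _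
    simp only [E7 p s a]
  · cases s <;> simp [E8]

lemma Xmain (p : B m) (j' : Fin m) (s : Bool) :
    excB (F p j'.castSucc s) + (if EP p (p.1.symm j') then 1 else 0) = excB p + 1 := by
  classical
  set i0 := p.1.symm j' with hi0
  rw [excB_eq, excB_eq, Finset.card_filter, Finset.card_filter, Fin.sum_univ_castSucc]
  by_cases hij : i0 = j'
  · have hfix : p.1 j' = j' := by
      conv_lhs => rw [← hij, hi0, p.1.apply_symm_apply]
    rw [← Finset.add_sum_erase _
        (fun a : Fin m => if EP (F p j'.castSucc s) a.castSucc then (1:ℕ) else 0)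
        (Finset.mem_univ j'),
        ← Finset.add_sum_erase _ (fun a : Fin m => if EP p a then (1:ℕ) else 0)
        (Finset.mem_univ j')]
    have htail : ∑ a ∈ univ.erase j', (if EP (F p j'.castSucc s) a.castSucc then (1:ℕ) else 0)
        = ∑ a ∈ univ.erase j', (if EP p a then (1:ℕ) else 0) := by
      apply Finset.sum_congr rfl
      intro a ha
      have ha1 : a ≠ j' := (Finset.mem_erase.mp ha).1
      have ha2 : p.1 a ≠ j' := by
        intro hc
        exact ha1 (by rw [← hij, hi0, ← hc, Equiv.symm_apply_apply])
      simp only [E1 p j' s a ha1 ha2]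
    rw [htail, hij]
    simp only [E3 p j' s, E5 p j' s hfix]
    by_cases hEP : EP p j' <;> cases s <;> simp [hEP] <;> omega
  · have hne : p.1 j' ≠ j' := by
      intro hc
      exact hij (hi0 ▸ (Equiv.symm_apply_eq p.1).mpr hc.symm)
    have hi0mem : i0 ∈ univ.erase j' := Finset.mem_erase.mpr ⟨hij, Finset.mem_univ _⟩
    rw [← Finset.add_sum_erase _
        (fun a : Fin m => if EP (F p j'.castSucc s) a.castSucc then (1:ℕ) else 0)
        (Finset.mem_univ j'),
        ← Finset.add_sum_erase _ (fun a : Fin m => if EP p a then (1:ℕ) else 0)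
        (Finset.mem_univ j'),
        ← Finset.add_sum_erase _
        (fun a : Fin m => if EP (F p j'.castSucc s) a.castSucc then (1:ℕ) else 0) hi0mem,
        ← Finset.add_sum_erase _ (fun a : Fin m => if EP p a then (1:ℕ) else 0) hi0mem]
    have htail : ∑ a ∈ (univ.erase j').erase i0,
          (if EP (F p j'.castSucc s) a.castSucc then (1:ℕ) else 0)
        = ∑ a ∈ (univ.erase j').erase i0, (if EP p a then (1:ℕ) else 0) := by
      apply Finset.sum_congr rfl
      intro a ha
      have ha0 : a ≠ i0 := (Finset.mem_erase.mp ha).1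
      have ha1 : a ≠ j' := (Finset.mem_erase.mp ((Finset.mem_erase.mp ha).2)).1
      have ha2 : p.1 a ≠ j' := by
        intro hc
        exact ha0 (by rw [hi0, ← hc, Equiv.symm_apply_apply])
      simp only [E1 p j' s a ha1 ha2]
    rw [htail]
    have hE2 : EP (F p j'.castSucc s) i0.castSucc ↔ s = false := E2 p j' s hij
    simp only [E3 p j' s, hE2, E4 p j' s hne]
    by_cases hEP1 : EP p j' <;> by_cases hEP2 : EP p i0 <;> cases s <;>
      simp [hEP1, hEP2] <;> omega

lemma sval_F_one_eq (hm : 0 < m) (p : B m) (s : Bool) :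
    sval (F p (Fin.castSucc ⟨0, hm⟩) s) 1 = (if s then -1 else 1) * ((m : ℤ) + 1) := by
  rw [sval_one _ (Nat.succ_pos m)]
  have h0 : (⟨0, Nat.succ_pos m⟩ : Fin (m+1)) = Fin.castSucc ⟨0, hm⟩ := by
    apply Fin.ext; rfl
  rw [h0]
  exact pos_F_j p (Fin.castSucc ⟨0, hm⟩) s

lemma sval_F_one_ne (hm : 0 < m) (p : B m) (j : Fin (m+1)) (s : Bool)
    (h : Fin.castSucc (⟨0, hm⟩ : Fin m) ≠ j) : sval (F p j s) 1 = sval p 1 := by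
  rw [sval_one _ (Nat.succ_pos m), sval_one p hm]
  have h0 : (⟨0, Nat.succ_pos m⟩ : Fin (m+1)) = Fin.castSucc ⟨0, hm⟩ := by
    apply Fin.ext; rfl
  rw [h0]
  exact pos_F_castSucc p j s _ h

lemma F_injective : Function.Injective
    (fun x : B m × Fin (m+1) × Bool => F x.1 x.2.1 x.2.2) := by
  rintro ⟨p, j, s⟩ ⟨p', j', s'⟩ h
  simp only [Prod.mk.injEq] at h ⊢
  have h1 : Fσ p j = Fσ p' j' := congrArg Prod.fst h
  have h2 : Fε p j s = Fε p' j' s' := congrArg Prod.snd h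
  have hjj : j = j' := by
    have e1 : Fσ p' j' j = Fin.last m := by rw [← h1]; exact Fσ_apply_j p j
    exact (Fσ p' j').injective (e1.trans (Fσ_apply_j p' j').symm)
  subst hjj
  have hss : s = s' := by
    have := congrFun h2 j
    rwa [Fε_j, Fε_j] at this
  refine ⟨Prod.ext ?_ ?_, rfl, hss⟩
  · apply Equiv.ext
    intro a
    by_cases hc : a.castSucc = j
    · subst hc
      have e1 : Fσ p a.castSucc (Fin.last m) = (p.1 a).castSucc := by
        rw [Fσ_last, ext0_castSucc]
      have e2 : Fσ p' a.castSucc (Fin.last m) = (p'.1 a).castSucc := by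
        rw [Fσ_last, ext0_castSucc]
      have := e1.symm.trans ((congrFun (congrArg _ h1) (Fin.last m)).trans e2)
      exact Fin.castSucc_injective m this
    · have e1 := Fσ_castSucc p j a hc
      have e2 := Fσ_castSucc p' j a hc
      have : Fσ p j a.castSucc = Fσ p' j a.castSucc := by rw [h1]
      rw [e1, e2] at this
      exact Fin.castSucc_injective m this
  · funext a
    by_cases hc : a.castSucc = j
    · subst hc
      have e1 := Fε_last p a s
      have e2 := Fε_last p' a s'
      have := congrFun h2 (Fin.last m)
      rw [e1, e2] at this
      exact this
    · have e1 := Fε_castSucc p j s a hc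
      have e2 := Fε_castSucc p' j s' a hc
      have := congrFun h2 a.castSucc
      rw [e1, e2] at this
      exact this

lemma F_bijective : Function.Bijective
    (fun x : B m × Fin (m+1) × Bool => F x.1 x.2.1 x.2.2) := by
  rw [Fintype.bijective_iff_injective_and_card]
  refine ⟨F_injective, ?_⟩
  simp only [Fintype.card_prod, Fintype.card_perm, Fintype.card_fun, Fintype.card_fin,
    Fintype.card_bool, Nat.factorial_succ]
  ring

lemma BE_split (d : ℕ) (K : ℤ) :
    BEcount (m+1) d K = ∑ p : B m, ∑ j : Fin (m+1), ∑ s : Bool,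
      (if (excB (F p j s) = d ∧ sval (F p j s) 1 = K) then 1 else 0) := by
  classical
  unfold BEcount
  have hcard : (Finset.univ.filter
      (fun x : B m × Fin (m+1) × Bool => excB (F x.1 x.2.1 x.2.2) = d ∧
        sval (F x.1 x.2.1 x.2.2) 1 = K)).card
      = (Finset.univ.filter (fun q : B (m+1) => excB q = d ∧ sval q 1 = K)).card := by
    apply Finset.card_bij (fun x _ => F x.1 x.2.1 x.2.2)
    · intro x hx
      exact Finset.mem_filter.mpr ⟨Finset.mem_univ _, (Finset.mem_filter.mp hx).2⟩
    · intro x1 hx1 x2 hx2 hF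
      exact F_injective hF
    · intro b hb
      obtain ⟨x, hx⟩ := F_bijective.2 b
      refine ⟨x, Finset.mem_filter.mpr ⟨Finset.mem_univ _, ?_⟩, hx⟩
      show excB ((fun x : B m × Fin (m+1) × Bool => F x.1 x.2.1 x.2.2) x) = d ∧
        sval ((fun x : B m × Fin (m+1) × Bool => F x.1 x.2.1 x.2.2) x) 1 = K
      rw [hx]
      exact (Finset.mem_filter.mp hb).2
  rw [← hcard, Finset.card_filter]
  rw [Fintype.sum_prod_type]
  apply Finset.sum_congr rfl
  intro p _
  rw [Fintype.sum_prod_type]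

def i1 (hm : 0 < m) (p : B m) : Fin m := p.1.symm ⟨0, hm⟩

def Kp (hm : 0 < m) (p : B m) : ℕ := ((univ.erase (i1 hm p)).filter (EP p)).card

lemma Kp_card (hm : 0 < m) (p : B m) :
    Kp hm p + ((univ.erase (i1 hm p)).filter (fun a => ¬ EP p a)).card = m - 1 := by
  rw [Kp, Finset.card_filter_add_card_filter_not,
    Finset.card_erase_of_mem (Finset.mem_univ _), Finset.card_univ, Fintype.card_fin]

lemma excB_split (hm : 0 < m) (p : B m) :
    excB p = (if EP p (i1 hm p) then 1 else 0) + Kp hm p := by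
  rw [excB_eq, Finset.card_filter, ← Finset.add_sum_erase _ _ (Finset.mem_univ (i1 hm p)),
    Kp, Finset.card_filter]

lemma perP0 (hm : 0 < m) (p : B m) (K : ℤ) (hKm : |K| ≤ (m:ℤ)) (h1 : sval p 1 ≠ K) (d : ℕ) :
    (∑ j : Fin (m+1), ∑ s : Bool,
      if (excB (F p j s) = d ∧ sval (F p j s) 1 = K) then (1:ℕ) else 0) = 0 := by
  have hK2 := abs_le.mp hKm
  apply Finset.sum_eq_zero; intro j _
  apply Finset.sum_eq_zero; intro s _
  rw [if_neg]
  rintro ⟨-, hs⟩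
  by_cases hj : Fin.castSucc (⟨0, hm⟩ : Fin m) = j
  · rw [← hj, sval_F_one_eq hm p s] at hs
    rcases s <;> simp at hs <;> omega
  · rw [sval_F_one_ne hm p j s hj] at hs; exact h1 hs

lemma perP (hm : 0 < m) (p : B m) (K : ℤ) (hKm : |K| ≤ (m:ℤ)) (h1 : sval p 1 = K) (d : ℕ) :
    (∑ j : Fin (m+1), ∑ s : Bool,
      if (excB (F p j s) = d ∧ sval (F p j s) 1 = K) then (1:ℕ) else 0)
    = (if excB p = d then 2 * Kp hm p + 1 else 0)
      + (if excB p + 1 = d then 2 * (m - 1 - Kp hm p) + 1 else 0) := by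
  classical
  have hK2 := abs_le.mp hKm
  set A : ℕ := if excB p = d then 1 else 0 with hA
  set Bb : ℕ := if excB p + 1 = d then 1 else 0 with hB
  set v : Fin m → ℕ := fun i => if EP p i then 2 * A else 2 * Bb with hv
  rw [Fin.sum_univ_castSucc]
  have hlast : (∑ s : Bool, if (excB (F p (Fin.last m) s) = d ∧
      sval (F p (Fin.last m) s) 1 = K) then (1:ℕ) else 0) = A + Bb := by
    have hne : Fin.castSucc (⟨0, hm⟩ : Fin m) ≠ Fin.last m := (Fin.castSucc_lt_last _).ne
    rw [Fintype.sum_bool, sval_F_one_ne hm p _ true hne, sval_F_one_ne hm p _ false hne, h1,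
      X1 p true, X1 p false]
    simp only [if_true, Bool.false_eq_true, if_false, eq_self_iff_true, and_true, add_zero,
      hA, hB]
    split_ifs <;> omega
  have hmid : ∀ j' : Fin m, (∑ s : Bool, if (excB (F p j'.castSucc s) = d ∧
      sval (F p j'.castSucc s) 1 = K) then (1:ℕ) else 0)
      = if j' = (⟨0, hm⟩ : Fin m) then 0 else v (p.1.symm j') := by
    intro j'
    by_cases hz : j' = (⟨0, hm⟩ : Fin m)
    · rw [if_pos hz, hz]
      apply Finset.sum_eq_zero; intro s _
      rw [if_neg]
      rintro ⟨-, hs⟩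
      rw [sval_F_one_eq hm p s] at hs
      rcases s <;> simp at hs <;> omega
    · rw [if_neg hz]
      have hcs : Fin.castSucc (⟨0, hm⟩ : Fin m) ≠ j'.castSucc := by
        simp only [ne_eq, Fin.castSucc_inj]
        exact fun hc => hz hc.symm
      rw [Fintype.sum_bool, sval_F_one_ne hm p _ true hcs, sval_F_one_ne hm p _ false hcs, h1]
      have hX1 := Xmain p j' true
      have hX2 := Xmain p j' false
      by_cases hEP : EP p (p.1.symm j')
      · rw [if_pos hEP] at hX1 hX2
        have e1 : excB (F p j'.castSucc true) = excB p := by omega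
        have e2 : excB (F p j'.castSucc false) = excB p := by omega
        rw [e1, e2, hv]
        simp only [if_pos hEP, eq_self_iff_true, and_true, hA]
        split_ifs <;> omega
      · rw [if_neg hEP] at hX1 hX2
        have e1 : excB (F p j'.castSucc true) = excB p + 1 := by omega
        have e2 : excB (F p j'.castSucc false) = excB p + 1 := by omega
        rw [e1, e2, hv]
        simp only [if_neg hEP, eq_self_iff_true, and_true, hB]
        split_ifs <;> omega
  rw [Finset.sum_congr rfl (fun j' _ => hmid j'), hlast]
  have hstep1 : (∑ j' : Fin m, if j' = (⟨0, hm⟩ : Fin m) then 0 else v (p.1.symm j'))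
      = ∑ i : Fin m, (if i = i1 hm p then 0 else v i) := by
    rw [← Equiv.sum_comp p.1
      (fun j' => if j' = (⟨0, hm⟩ : Fin m) then 0 else v (p.1.symm j'))]
    apply Finset.sum_congr rfl
    intro i _
    by_cases hi : i = i1 hm p
    · rw [if_pos hi, if_pos]
      rw [hi, i1, p.1.apply_symm_apply]
    · rw [if_neg hi, if_neg, Equiv.symm_apply_apply]
      intro hc2
      exact hi (by rw [i1, ← hc2, Equiv.symm_apply_apply])
  rw [hstep1, ← Finset.add_sum_erase _ _ (Finset.mem_univ (i1 hm p)), if_pos rfl, zero_add]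
  have hstep2 : (∑ i ∈ univ.erase (i1 hm p), if i = i1 hm p then 0 else v i)
      = ∑ i ∈ univ.erase (i1 hm p), v i := by
    apply Finset.sum_congr rfl
    intro i hi
    rw [if_neg (Finset.mem_erase.mp hi).1]
  rw [hstep2, ← Finset.sum_filter_add_sum_filter_not (univ.erase (i1 hm p)) (EP p) v]
  have hc1 : (∑ i ∈ (univ.erase (i1 hm p)).filter (EP p), v i) = Kp hm p * (2 * A) := by
    apply Finset.sum_const_nat
    intro i hi
    rw [hv]
    simp only [if_pos (Finset.mem_filter.mp hi).2]
  have hc2 : (∑ i ∈ (univ.erase (i1 hm p)).filter (fun a => ¬ EP p a), v i)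
      = ((univ.erase (i1 hm p)).filter (fun a => ¬ EP p a)).card * (2 * Bb) := by
    apply Finset.sum_const_nat
    intro i hi
    rw [hv]
    simp only [if_neg (Finset.mem_filter.mp hi).2]
  rw [hc1, hc2]
  have hKc := Kp_card hm p
  rw [hA, hB]
  split_ifs <;> omega

lemma pos_i1_abs (hm : 0 < m) (p : B m) : |pos p (i1 hm p)| = 1 := by
  rw [abs_pos, i1, p.1.apply_symm_apply]
  simp

lemma EP_i1_pos (hm : 0 < m) (p : B m) (K : ℤ) (hK : 2 ≤ K) (h1 : sval p 1 = K) :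
    EP p (i1 hm p) := by
  left
  have hp : p.1 (i1 hm p) = ⟨0, hm⟩ := p.1.apply_symm_apply _
  rw [hp, ← sval_one p hm, h1]
  have h2 := pos_i1_abs hm p
  have h3 := le_abs_self (pos p (i1 hm p))
  omega

lemma EP_i1_neg (hm : 0 < m) (p : B m) (K : ℤ) (hK : K ≤ -2) (h1 : sval p 1 = K) :
    ¬ EP p (i1 hm p) := by
  have hp : p.1 (i1 hm p) = ⟨0, hm⟩ := p.1.apply_symm_apply _
  have h2 := pos_i1_abs hm p
  rintro (h | h)
  · rw [hp, ← sval_one p hm, h1] at h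
    have h3 := neg_abs_le (pos p (i1 hm p))
    omega
  · have hfix := fix_of_pos_eq p _ h
    have heq : i1 hm p = ⟨0, hm⟩ := hfix.symm.trans hp
    rw [heq] at h
    rw [← sval_one p hm, h1] at h
    simp at h
    omega

lemma exc_pos {N : ℕ} (hN : 0 < N) (p : B N) (K : ℤ) (hK : 2 ≤ K) (h1 : sval p 1 = K) :
    1 ≤ excB p := by
  rw [excB_eq]
  have : i1 hN p ∈ univ.filter (EP p) :=
    Finset.mem_filter.mpr ⟨Finset.mem_univ _, EP_i1_pos hN p K hK h1⟩
  exact Finset.card_pos.mpr ⟨_, this⟩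

lemma BE_zero (N : ℕ) (hN : 0 < N) (K : ℤ) (hK : 2 ≤ K) : BEcount N 0 K = 0 := by
  unfold BEcount
  rw [Finset.card_eq_zero, Finset.eq_empty_iff_forall_notMem]
  intro p hp
  obtain ⟨he, h1⟩ := (Finset.mem_filter.mp hp).2
  have := exc_pos hN p K hK h1
  omega

lemma BE_top_neg (N : ℕ) (hN : 0 < N) (K : ℤ) (hK : K ≤ -2) : BEcount N N K = 0 := by
  unfold BEcount
  rw [Finset.card_eq_zero, Finset.eq_empty_iff_forall_notMem]
  intro p hp
  obtain ⟨he, h1⟩ := (Finset.mem_filter.mp hp).2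
  have hsub : univ.filter (EP p) ⊆ univ.erase (i1 hN p) := by
    intro x hx
    refine Finset.mem_erase.mpr ⟨?_, Finset.mem_univ _⟩
    intro hc
    exact EP_i1_neg hN p K hK h1 (hc ▸ (Finset.mem_filter.mp hx).2)
  have hcard := Finset.card_le_card hsub
  rw [Finset.card_erase_of_mem (Finset.mem_univ _), Finset.card_univ, Fintype.card_fin] at hcard
  rw [excB_eq] at he
  omega

lemma step_pos (hm : 0 < m) (K : ℤ) (hK : 2 ≤ K) (hKm : K ≤ (m:ℤ)) (d : ℕ) :
    BEcount (m+1) d K = (2*d - 1) * BEcount m d K + (2*(m+1-d) + 1) * BEcount m (d-1) K := by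
  rw [BE_split d K]
  have hKabs : |K| ≤ (m:ℤ) := abs_le.mpr ⟨by omega, hKm⟩
  have hpt : ∀ p : B m, (∑ j : Fin (m+1), ∑ s : Bool,
      if (excB (F p j s) = d ∧ sval (F p j s) 1 = K) then (1:ℕ) else 0)
      = (2*d-1) * (if (excB p = d ∧ sval p 1 = K) then 1 else 0)
        + (2*(m+1-d)+1) * (if (excB p = d-1 ∧ sval p 1 = K) then 1 else 0) := by
    intro p
    by_cases h1 : sval p 1 = K
    · rw [perP hm p K hKabs h1 d]
      have hEP := EP_i1_pos hm p K hK h1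
      have hsplit := excB_split hm p
      rw [if_pos hEP] at hsplit
      have hKc := Kp_card hm p
      simp only [h1, and_true]
      split_ifs <;> omega
    · rw [perP0 hm p K hKabs h1 d]
      simp [h1]
  rw [Finset.sum_congr rfl (fun p _ => hpt p), Finset.sum_add_distrib,
    ← Finset.mul_sum, ← Finset.mul_sum]
  unfold BEcount
  rw [Finset.card_filter, Finset.card_filter]

lemma step_neg (hm : 0 < m) (K : ℤ) (hK : K ≤ -2) (hKm : -K ≤ (m:ℤ)) (d : ℕ) (hd1 : 1 ≤ d) :
    BEcount (m+1) d K = (2*d + 1) * BEcount m d K + (2*(m-d) + 1) * BEcount m (d-1) K := by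
  rw [BE_split d K]
  have hKabs : |K| ≤ (m:ℤ) := abs_le.mpr ⟨by omega, by omega⟩
  have hpt : ∀ p : B m, (∑ j : Fin (m+1), ∑ s : Bool,
      if (excB (F p j s) = d ∧ sval (F p j s) 1 = K) then (1:ℕ) else 0)
      = (2*d+1) * (if (excB p = d ∧ sval p 1 = K) then 1 else 0)
        + (2*(m-d)+1) * (if (excB p = d-1 ∧ sval p 1 = K) then 1 else 0) := by
    intro p
    by_cases h1 : sval p 1 = K
    · rw [perP hm p K hKabs h1 d]
      have hEP := EP_i1_neg hm p K hK h1
      have hsplit := excB_split hm p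
      rw [if_neg hEP] at hsplit
      have hKc := Kp_card hm p
      simp only [h1, and_true]
      split_ifs <;> omega
    · rw [perP0 hm p K hKabs h1 d]
      simp [h1]
  rw [Finset.sum_congr rfl (fun p _ => hpt p), Finset.sum_add_distrib,
    ← Finset.mul_sum, ← Finset.mul_sum]
  unfold BEcount
  rw [Finset.card_filter, Finset.card_filter]

lemma step_neg0 (hm : 0 < m) (K : ℤ) (hK : K ≤ -2) (hKm : -K ≤ (m:ℤ)) :
    BEcount (m+1) 0 K = BEcount m 0 K := by
  rw [BE_split 0 K]
  have hKabs : |K| ≤ (m:ℤ) := abs_le.mpr ⟨by omega, by omega⟩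
  have hpt : ∀ p : B m, (∑ j : Fin (m+1), ∑ s : Bool,
      if (excB (F p j s) = 0 ∧ sval (F p j s) 1 = K) then (1:ℕ) else 0)
      = (if (excB p = 0 ∧ sval p 1 = K) then 1 else 0) := by
    intro p
    by_cases h1 : sval p 1 = K
    · rw [perP hm p K hKabs h1 0]
      have hEP := EP_i1_neg hm p K hK h1
      have hsplit := excB_split hm p
      rw [if_neg hEP] at hsplit
      simp only [h1, and_true]
      split_ifs <;> first | omega | (exact (by assumption : False).elim)
    · rw [perP0 hm p K hKabs h1 0]
      simp [h1]
  rw [Finset.sum_congr rfl (fun p _ => hpt p)]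
  unfold BEcount
  rw [Finset.card_filter]

end Stmt15aux

open Stmt15aux

/-- For `n ≥ 3`, `0 ≤ d ≤ n`, `2 ≤ k ≤ n-1`:
`BE_{n,d,k} = (2d-1)·BE_{n-1,d,k} + (2(n-d)+1)·BE_{n-1,d-1,k}` and
`BE_{n,d,-k} = (2d+1)·BE_{n-1,d,-k} + (2(n-d-1)+1)·BE_{n-1,d-1,-k}`,
with the convention `BE_{n-1,-1,±k} = 0` (the `if d = 0` clauses). -/
theorem stmt15 (n d k : ℕ) (hn : 3 ≤ n) (hd : d ≤ n) (hk1 : 2 ≤ k) (hk2 : k ≤ n - 1) :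
    ((BEcount n d (k : ℤ) : ℤ) =
      (2 * (d : ℤ) - 1) * (BEcount (n - 1) d (k : ℤ) : ℤ) +
        (2 * ((n : ℤ) - (d : ℤ)) + 1) *
          (if d = 0 then 0 else (BEcount (n - 1) (d - 1) (k : ℤ) : ℤ))) ∧
    ((BEcount n d (-(k : ℤ)) : ℤ) =
      (2 * (d : ℤ) + 1) * (BEcount (n - 1) d (-(k : ℤ)) : ℤ) +
        (2 * ((n : ℤ) - (d : ℤ) - 1) + 1) *
          (if d = 0 then 0 else (BEcount (n - 1) (d - 1) (-(k : ℤ)) : ℤ))) := by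
  obtain ⟨m, rfl⟩ : ∃ m, n = m + 1 := ⟨n - 1, by omega⟩
  have hm : 0 < m := by omega
  have hk2' : (2:ℤ) ≤ (k:ℤ) := by exact_mod_cast hk1
  have hkm : (k:ℤ) ≤ (m:ℤ) := by
    have hkm' : k ≤ m := by omega
    exact_mod_cast hkm'
  have hms : m + 1 - 1 = m := by omega
  rw [hms]
  constructor
  · by_cases hd0 : d = 0
    · subst hd0
      rw [if_pos rfl, BE_zero (m+1) (by omega) (k:ℤ) hk2', BE_zero m hm (k:ℤ) hk2']
      simp
    · rw [if_neg hd0, step_pos hm (k:ℤ) hk2' hkm d]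
      have c1 : ((2*d - 1 : ℕ) : ℤ) = 2*(d:ℤ) - 1 := by omega
      have c2 : ((2*(m+1-d) + 1 : ℕ) : ℤ) = 2*((m:ℤ)+1-(d:ℤ)) + 1 := by
        have hdm : d ≤ m + 1 := hd
        omega
      rw [Nat.cast_add, Nat.cast_mul, Nat.cast_mul, c1, c2]
      push_cast
      ring
  · have hneg : (-(k:ℤ)) ≤ -2 := by omega
    have hKm : -(-(k:ℤ)) ≤ (m:ℤ) := by omega
    by_cases hd0 : d = 0
    · subst hd0
      rw [if_pos rfl, step_neg0 hm (-(k:ℤ)) hneg hKm]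
      push_cast
      ring
    · rw [if_neg hd0, step_neg hm (-(k:ℤ)) hneg hKm d (by omega)]
      by_cases hdm : d ≤ m
      · have c2 : ((2*(m-d) + 1 : ℕ) : ℤ) = 2*((m:ℤ)-(d:ℤ)) + 1 := by omega
        rw [Nat.cast_add, Nat.cast_mul, Nat.cast_mul, c2]
        push_cast
        ring
      · have hdm1 : d = m + 1 := by omega
        have hz : BEcount m (d-1) (-(k:ℤ)) = 0 := by
          have : d - 1 = m := by omega
          rw [this]
          exact BE_top_neg m hm (-(k:ℤ)) hneg
        rw [hz]
        push_cast
        ring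
end

section
/- For integers n ≥ 2 and 1 ≤ k ≤ n-1, the restricted type B Eulerian polynomials satisfy the differential recurrences B_{n,k}(t) = [1 + (2n-3)t]·B_{n-1,k}(t) + 2t(1-t)·B'_{n-1,k}(t) and B_{n,-k}(t) = [(2n-1)t - 1]·B_{n-1,-k}(t) + 2t(1-t)·B'_{n-1,-k}(t), where B' denotes the derivative with respect to t. -/
open Finset Polynomial

namespace St16


def F {M : ℕ} (p : Equiv.Perm (Fin M) × (Fin M → Bool)) : Fin M → ℤ :=
  fun i => (if p.2 i then -1 else 1) * ((p.1 i : ℕ) + 1)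

def nword (M : ℕ) (v : Fin M → ℤ) : ℕ → ℤ :=
  fun r => if h : 1 ≤ r ∧ r ≤ M then v ⟨r-1, by omega⟩ else 0

def dcount (M : ℕ) (w : ℕ → ℤ) : ℕ :=
  ((Finset.range M).filter (fun i => w (i+1) < w i)).card

lemma sval_eq {M : ℕ} (p : Equiv.Perm (Fin M) × (Fin M → Bool)) (r : ℕ) (hr : r ≤ M) :
    sval p (r : ℤ) = nword M (F p) r := by
  rcases Nat.eq_zero_or_pos r with h0 | h1
  · subst h0
    simp [sval, nword]
  · have h : 1 ≤ (r:ℤ) ∧ (r:ℤ) ≤ (M:ℤ) := by omega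
    rw [sval, dif_pos h, nword, dif_pos ⟨h1, hr⟩]
    have hidx : ((r:ℤ) - 1).toNat = r - 1 := by omega
    congr 2 <;> simp [F, hidx]

lemma desB_eq {M : ℕ} (p : Equiv.Perm (Fin M) × (Fin M → Bool)) :
    desB p = dcount M (nword M (F p)) := by
  unfold desB dcount
  refine Finset.card_bij (fun i _ => (i : ℕ)) ?_ ?_ ?_
  · intro i hi
    simp only [Finset.mem_filter, Finset.mem_univ, true_and] at hi ⊢
    rw [Finset.mem_range]
    refine ⟨i.2, ?_⟩
    rw [← sval_eq p (i+1) (by omega), ← sval_eq p i (by omega)]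
    exact_mod_cast hi
  · intro a ha b hb hab
    exact Fin.ext hab
  · intro b hb
    simp only [Finset.mem_filter, Finset.mem_range] at hb
    refine ⟨⟨b, hb.1⟩, ?_, rfl⟩
    simp only [Finset.mem_filter, Finset.mem_univ, true_and]
    rw [show (((b:ℕ)):ℤ) + 1 = ((b+1 : ℕ) : ℤ) by push_cast; ring]
    rw [sval_eq p (b+1) (by omega), sval_eq p b (by omega)]
    exact hb.2




def insFn {M : ℕ} (j : Fin M) (x : ℤ) (v : Fin M → ℤ) : Fin (M+1) → ℤ :=
  fun i => if h : (i:ℕ) ≤ (j:ℕ) then v ⟨i, by have := j.2; omega⟩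
    else if h2 : (i:ℕ) = (j:ℕ)+1 then x
    else v ⟨(i:ℕ)-1, by have := i.2; omega⟩

def insg {M : ℕ} (e : Equiv.Perm (Fin M)) (j : Fin M) : Fin (M+1) → Fin (M+1) :=
  fun i => if h : (i:ℕ) ≤ (j:ℕ) then (e ⟨i, by have := j.2; omega⟩).castSucc
    else if h2 : (i:ℕ) = (j:ℕ)+1 then Fin.last M
    else (e ⟨(i:ℕ)-1, by have := i.2; omega⟩).castSucc

lemma insg_inj {M : ℕ} (e : Equiv.Perm (Fin M)) (j : Fin M) :
    Function.Injective (insg e j) := by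
  intro a b hab
  unfold insg at hab
  have hlt : ∀ i : Fin M, ((e i).castSucc : Fin (M+1)) ≠ Fin.last M := by
    intro i h
    have := congrArg Fin.val h
    simp [Fin.castSucc, Fin.last] at this
    omega
  split_ifs at hab with h1 h2 h3 h4 h5 <;>
    first
      | (exact absurd hab (hlt _))
      | (exact absurd hab.symm (hlt _))
      | (apply Fin.ext; omega)
      | (have := congrArg Fin.val (e.injective (Fin.castSucc_injective M hab));
         simp at this; apply Fin.ext; omega)

noncomputable def insPerm {M : ℕ} (e : Equiv.Perm (Fin M)) (j : Fin M) :
    Equiv.Perm (Fin (M+1)) :=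
  Equiv.ofBijective _ (Finite.injective_iff_bijective.1 (insg_inj e j))

lemma insPerm_apply {M : ℕ} (e : Equiv.Perm (Fin M)) (j : Fin M) (i : Fin (M+1)) :
    insPerm e j i = insg e j i := rfl

def remFn {M : ℕ} (P : ℕ) (u : Fin (M+1) → ℤ) : Fin M → ℤ :=
  fun i => if (i:ℕ) < P then u i.castSucc else u i.succ

def remg {M : ℕ} (e : Equiv.Perm (Fin (M+1))) (i : Fin M) : Fin (M+1) :=
  e (if (i:ℕ) < ((e.symm (Fin.last M)) : ℕ) then i.castSucc else i.succ)

lemma remg_lt {M : ℕ} (e : Equiv.Perm (Fin (M+1))) (i : Fin M) :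
    ((remg e i : Fin (M+1)) : ℕ) < M := by
  have h : remg e i ≠ Fin.last M := by
    unfold remg
    intro h
    have h2 := congrArg e.symm h
    simp only [Equiv.symm_apply_apply] at h2
    have h3 := congrArg Fin.val h2
    split_ifs at h3 with hc <;>
      simp only [Fin.coe_castSucc, Fin.val_succ] at h3 <;> omega
  have := (remg e i).2
  rcases Nat.lt_succ_iff_lt_or_eq.1 this with h' | h'
  · exact h'
  · exact absurd (Fin.ext h' : remg e i = Fin.last M) h

lemma remg_inj {M : ℕ} (e : Equiv.Perm (Fin (M+1))) :
    Function.Injective (fun i => (⟨remg e i, remg_lt e i⟩ : Fin M)) := by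
  intro a b hab
  have h1 : remg e a = remg e b := by
    have := congrArg Fin.val hab; exact Fin.ext this
  unfold remg at h1
  have h2 := e.injective h1
  split_ifs at h2 <;>
    · have := congrArg Fin.val h2
      simp [Fin.castSucc, Fin.succ] at this ⊢
      apply Fin.ext
      omega

noncomputable def remPerm {M : ℕ} (e : Equiv.Perm (Fin (M+1))) : Equiv.Perm (Fin M) :=
  Equiv.ofBijective _ (Finite.injective_iff_bijective.1 (remg_inj e))

lemma remPerm_apply {M : ℕ} (e : Equiv.Perm (Fin (M+1))) (i : Fin M) :
    (remPerm e i : ℕ) = (remg e i : ℕ) := rfl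




lemma F_natAbs {M : ℕ} (p : Equiv.Perm (Fin M) × (Fin M → Bool)) (i : Fin M) :
    (F p i).natAbs = (p.1 i : ℕ) + 1 := by
  unfold F; split_ifs <;> [skip; skip] <;> omega

lemma F_neg_iff {M : ℕ} (p : Equiv.Perm (Fin M) × (Fin M → Bool)) (i : Fin M) :
    F p i < 0 ↔ p.2 i = true := by
  unfold F; split_ifs with h <;> simp [h] <;> omega

lemma F_inj {M : ℕ} : Function.Injective (F (M := M)) := by
  intro p q hpq
  have h1 : p.1 = q.1 := by
    apply Equiv.ext; intro i
    have := congrArg Int.natAbs (congrFun hpq i)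
    rw [F_natAbs, F_natAbs] at this
    exact Fin.ext (by omega)
  have h2 : p.2 = q.2 := by
    funext i
    have := congrFun hpq i
    have h3 := (F_neg_iff p i)
    have h4 := (F_neg_iff q i)
    rw [this] at h3
    rw [h3] at h4
    cases hb : p.2 i <;> cases hb' : q.2 i <;> simp [hb, hb'] at h4 ⊢
  exact Prod.ext h1 h2

def hasPerm (M : ℕ) (v : Fin M → ℤ) : Prop :=
  ∃ e : Equiv.Perm (Fin M), ∀ i, (v i).natAbs = (e i : ℕ) + 1

noncomputable def SPset (M : ℕ) (k : ℤ) : Finset (Fin M → ℤ) :=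
  Finset.image F (Finset.univ.filter
    (fun p : Equiv.Perm (Fin M) × (Fin M → Bool) => sval p 1 = k))

lemma sval_one {M : ℕ} (hM : 1 ≤ M) (p : Equiv.Perm (Fin M) × (Fin M → Bool)) :
    sval p 1 = F p ⟨0, hM⟩ := by
  rw [show (1:ℤ) = ((1:ℕ):ℤ) by norm_num, sval]
  rw [dif_pos (by constructor <;> omega)]
  unfold F
  norm_num

lemma mem_SPset {M : ℕ} (hM : 1 ≤ M) (k : ℤ) (u : Fin M → ℤ) :
    u ∈ SPset M k ↔ hasPerm M u ∧ u ⟨0, hM⟩ = k := by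
  unfold SPset
  simp only [Finset.mem_image, Finset.mem_filter, Finset.mem_univ, true_and]
  constructor
  · rintro ⟨p, hp1, rfl⟩
    refine ⟨⟨p.1, fun i => F_natAbs p i⟩, ?_⟩
    rw [← sval_one hM p]; exact hp1
  · rintro ⟨⟨e, he⟩, h0⟩
    refine ⟨(e, fun i => decide (u i < 0)), ?_, ?_⟩
    · rw [sval_one hM]
      have : F (e, fun i => decide (u i < 0)) = u := by
        funext i
        unfold F
        simp only [decide_eq_true_eq]
        have hna := he i
        rcases Int.natAbs_eq (u i) with h | h <;> split_ifs with hcond <;> omega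
      rw [this, h0]
    · funext i
      unfold F
      simp only [decide_eq_true_eq]
      have hna := he i
      rcases Int.natAbs_eq (u i) with h | h <;> split_ifs with hcond <;> omega

lemma natAbs_le {M : ℕ} {u : Fin M → ℤ} (h : hasPerm M u) (i : Fin M) :
    (u i).natAbs ≤ M := by
  obtain ⟨e, he⟩ := h
  have h1 := he i
  have := (e i).2
  omega

noncomputable def posOf {M : ℕ} (u : Fin (M+1) → ℤ) : ℕ :=
  ∑ i : Fin (M+1), if (u i).natAbs = M + 1 then (i : ℕ) else 0

lemma posOf_eq {M : ℕ} {u : Fin (M+1) → ℤ} (h : hasPerm (M+1) u) (i0 : Fin (M+1))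
    (h0 : (u i0).natAbs = M + 1) : posOf u = (i0 : ℕ) := by
  obtain ⟨e, he⟩ := h
  have huniq : ∀ i : Fin (M+1), (u i).natAbs = M + 1 → i = i0 := by
    intro i hi
    apply e.injective
    apply Fin.ext
    have h1 := he i; have h2 := he i0
    have b1 := (e i).2; have b2 := (e i0).2
    omega
  unfold posOf
  rw [Finset.sum_eq_single i0]
  · simp [h0]
  · intro b _ hb
    rw [if_neg (fun hc => hb (huniq b hc))]
  · intro hb; exact absurd (Finset.mem_univ i0) hb




lemma dcount_sum (M : ℕ) (w : ℕ → ℤ) :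
    dcount M w = ∑ i ∈ Finset.range M, (if w (i+1) < w i then 1 else 0) := by
  rw [dcount, Finset.card_filter]

lemma dcount_insert (w w' : ℕ → ℤ) (M J : ℕ) (x : ℤ) (hJ1 : 1 ≤ J) (hJ2 : J ≤ M+1)
    (hw' : ∀ r, r ≤ M+1 → w' r = if r < J then w r else if r = J then x else w (r-1)) :
    dcount (M+1) w' + (if J ≤ M ∧ w J < w (J-1) then 1 else 0)
      = dcount M w + (if x < w (J-1) then 1 else 0) + (if J ≤ M ∧ w J < x then 1 else 0) := by
  have key : ∀ (r : ℕ), r ≤ M → (if w' (r+1) < w' r then (1:ℕ) else 0) =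
      if r < J - 1 then (if w (r+1) < w r then 1 else 0)
      else if r = J - 1 then (if x < w (J-1) then 1 else 0)
      else if r = J then (if w J < x then 1 else 0)
      else (if w r < w (r-1) then 1 else 0) := by
    intro r hr
    rw [hw' (r+1) (by omega), hw' r (by omega)]
    rcases Nat.lt_trichotomy r (J-1) with hc | hc | hc
    · split_ifs <;> omega
    · have hJ' : J = r + 1 := by omega
      subst hJ'
      simp only [Nat.add_sub_cancel]
      split_ifs <;> omega
    · by_cases hc2 : r = J
      · subst hc2
        simp only [Nat.add_sub_cancel]
        split_ifs <;> omega
      · simp only [Nat.add_sub_cancel]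
        split_ifs <;> omega
  have kJ1 := key (J-1) (by omega)
  rw [if_neg (by omega : ¬ (J-1 < J-1)), if_pos rfl] at kJ1
  have hsum' : dcount (M+1) w' =
      (∑ i ∈ Finset.Ico 0 (J-1), if w (i+1) < w i then (1:ℕ) else 0)
      + (if x < w (J-1) then 1 else 0)
      + (if J ≤ M then (if w J < x then 1 else 0) else 0)
      + (∑ i ∈ Finset.Ico J M, if w (i+1) < w i then (1:ℕ) else 0) := by
    rw [dcount_sum]
    rw [Finset.range_eq_Ico, ← Finset.sum_Ico_consecutive _ (Nat.zero_le (J-1)) (by omega : J-1 ≤ M+1)]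
    have e1 : ∑ i ∈ Finset.Ico 0 (J-1), (if w' (i+1) < w' i then (1:ℕ) else 0)
        = ∑ i ∈ Finset.Ico 0 (J-1), (if w (i+1) < w i then (1:ℕ) else 0) := by
      apply Finset.sum_congr rfl
      intro i hi
      rw [Finset.mem_Ico] at hi
      rw [key i (by omega), if_pos hi.2]
    rw [e1]
    rw [Finset.sum_eq_sum_Ico_succ_bot (show J-1 < M+1 by omega)]
    rw [kJ1, (by omega : J - 1 + 1 = J)]
    rcases Nat.lt_or_ge J (M+1) with hJM | hJM
    · have hJM' : J ≤ M := by omega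
      have kJ := key J (by omega)
      rw [if_neg (by omega : ¬ (J < J-1)), if_neg (by omega : ¬ (J = J-1)), if_pos rfl] at kJ
      rw [Finset.sum_eq_sum_Ico_succ_bot (show J < M+1 by omega), kJ]
      have e2 : ∑ i ∈ Finset.Ico (J+1) (M+1), (if w' (i+1) < w' i then (1:ℕ) else 0)
          = ∑ i ∈ Finset.Ico J M, (if w (i+1) < w i then (1:ℕ) else 0) := by
        rw [Finset.sum_Ico_eq_sum_range, Finset.sum_Ico_eq_sum_range]
        rw [(by omega : M + 1 - (J+1) = M - J)]
        apply Finset.sum_congr rfl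
        intro i hi
        rw [Finset.mem_range] at hi
        rw [(by omega : J + 1 + i = (J + i) + 1)]
        rw [key ((J+i)+1) (by omega)]
        rw [if_neg (by omega : ¬ ((J+i)+1 < J-1)), if_neg (by omega : ¬ ((J+i)+1 = J-1)),
            if_neg (by omega : ¬ ((J+i)+1 = J))]
        simp only [Nat.add_sub_cancel]
      rw [e2, if_pos hJM']
      ring
    · have hJM' : J = M + 1 := by omega
      subst hJM'
      rw [if_neg (by omega : ¬ (M + 1 ≤ M))]
      rw [(by omega : M + 1 - 1 = M)]
      rw [Finset.Ico_self, Finset.sum_empty, Finset.Ico_eq_empty (by omega : ¬ (M+1 < M)),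
        Finset.sum_empty]
      ring
  have hsum : dcount M w =
      (∑ i ∈ Finset.Ico 0 (J-1), if w (i+1) < w i then (1:ℕ) else 0)
      + (if J ≤ M then (if w J < w (J-1) then 1 else 0) else 0)
      + (∑ i ∈ Finset.Ico J M, if w (i+1) < w i then (1:ℕ) else 0) := by
    rw [dcount_sum]
    rw [Finset.range_eq_Ico, ← Finset.sum_Ico_consecutive _ (Nat.zero_le (J-1)) (by omega : J-1 ≤ M)]
    rcases Nat.lt_or_ge (J-1) M with hJM | hJM
    · have hJM' : J ≤ M := by omega
      rw [Finset.sum_eq_sum_Ico_succ_bot hJM]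
      rw [(by omega : J - 1 + 1 = J), if_pos hJM']
      ring
    · have hJ0 : J - 1 = M := by omega
      have hJM'' : ¬ (J ≤ M) := by omega
      rw [hJ0, if_neg hJM'']
      rw [Finset.Ico_eq_empty (by omega : ¬ (J < M)), Finset.sum_empty, Finset.Ico_self,
        Finset.sum_empty]
      ring
  rw [hsum', hsum]
  rcases Nat.lt_or_ge M J with h | h
  · rw [if_neg (fun hh : J ≤ M ∧ w J < w (J-1) => absurd hh.1 (by omega)),
      if_neg (fun hh : J ≤ M ∧ w J < x => absurd hh.1 (by omega)),
      if_neg (by omega : ¬ (J ≤ M)), if_neg (by omega : ¬ (J ≤ M))]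
    ring
  · by_cases hd : w J < w (J-1) <;> by_cases hx : w J < x <;>
      simp only [if_pos h, hd, hx, and_true, and_false, if_true, if_false, true_and] <;>
      omega

end St16
namespace St16

lemma nword_insFn {M : ℕ} (j : Fin M) (x : ℤ) (v : Fin M → ℤ) :
    ∀ r, r ≤ M+1 → nword (M+1) (insFn j x v) r =
      if r < (j:ℕ)+2 then nword M v r else if r = (j:ℕ)+2 then x else nword M v (r-1) := by
  intro r hr
  have hj := j.2
  unfold nword insFn
  simp only [Fin.val_mk, Fin.coe_castSucc, Fin.val_succ]
  split_ifs
  all_goals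
    first
    | rfl
    | omega
    | (congr 1; apply Fin.ext; simp only [Fin.val_mk, Fin.coe_castSucc, Fin.val_succ]; omega)
    | (exfalso; omega)

lemma hasPerm_insFn {M : ℕ} {v : Fin M → ℤ} (h : hasPerm M v) (j : Fin M) {x : ℤ}
    (hx : x.natAbs = M+1) : hasPerm (M+1) (insFn j x v) := by
  obtain ⟨e, he⟩ := h
  refine ⟨insPerm e j, fun i => ?_⟩
  rw [insPerm_apply]
  unfold insFn insg
  split_ifs with h1 h2
  · simp only [Fin.coe_castSucc]
    exact he _
  · simp only [Fin.val_last]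
    exact hx
  · simp only [Fin.coe_castSucc]
    exact he _

lemma insFn_natAbs_at {M : ℕ} (j : Fin M) (x : ℤ) (v : Fin M → ℤ) :
    insFn j x v ⟨(j:ℕ)+1, by have := j.2; omega⟩ = x := by
  unfold insFn
  simp only [Fin.val_mk, Fin.coe_castSucc, Fin.val_succ]
  split_ifs
  all_goals
    first
    | rfl
    | omega
    | (congr 1; apply Fin.ext; simp only [Fin.val_mk, Fin.coe_castSucc, Fin.val_succ]; omega)
    | (exfalso; omega)

lemma posOf_insFn {M : ℕ} {v : Fin M → ℤ} (h : hasPerm M v) (j : Fin M) {x : ℤ}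
    (hx : x.natAbs = M+1) : posOf (insFn j x v) = (j:ℕ)+1 := by
  have h2 := hasPerm_insFn h j hx
  have := posOf_eq h2 ⟨(j:ℕ)+1, by have := j.2; omega⟩ (by rw [insFn_natAbs_at]; exact hx)
  simpa using this

lemma remFn_insFn {M : ℕ} (j : Fin M) (x : ℤ) (v : Fin M → ℤ) :
    remFn ((j:ℕ)+1) (insFn j x v) = v := by
  funext i
  have hi := i.2
  unfold remFn insFn
  simp only [Fin.val_mk, Fin.coe_castSucc, Fin.val_succ]
  split_ifs
  all_goals
    first
    | rfl
    | omega
    | (congr 1; apply Fin.ext; simp only [Fin.val_mk, Fin.coe_castSucc, Fin.val_succ]; omega)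
    | (exfalso; omega)

lemma posOf_le {M : ℕ} {u : Fin (M+1) → ℤ} (h : hasPerm (M+1) u) : posOf u ≤ M := by
  obtain ⟨e, he⟩ := h
  have hval : (u (e.symm (Fin.last M))).natAbs = M + 1 := by
    rw [he]
    simp
  rw [posOf_eq ⟨e, he⟩ _ hval]
  exact Nat.lt_succ_iff.mp (e.symm (Fin.last M)).2

lemma posOf_natAbs {M : ℕ} {u : Fin (M+1) → ℤ} (h : hasPerm (M+1) u) :
    (u ⟨posOf u, Nat.lt_succ_of_le (posOf_le h)⟩).natAbs = M + 1 := by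
  obtain ⟨e, he⟩ := h
  have hval : (u (e.symm (Fin.last M))).natAbs = M + 1 := by
    rw [he]; simp
  have hp := posOf_eq ⟨e, he⟩ _ hval
  have : (⟨posOf u, Nat.lt_succ_of_le (posOf_le ⟨e, he⟩)⟩ : Fin (M+1)) = e.symm (Fin.last M) := by
    apply Fin.ext; simp [hp]
  rw [this]
  exact hval

lemma posOf_pos {M : ℕ} {u : Fin (M+1) → ℤ} (h : hasPerm (M+1) u)
    (h0 : (u ⟨0, Nat.succ_pos M⟩).natAbs ≤ M) : 1 ≤ posOf u := by
  by_contra hc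
  have hp : posOf u = 0 := by omega
  have := posOf_natAbs h
  rw [show (⟨posOf u, Nat.lt_succ_of_le (posOf_le h)⟩ : Fin (M+1)) = ⟨0, Nat.succ_pos M⟩ from
    Fin.ext (by simp [hp])] at this
  omega

lemma hasPerm_remFn {M : ℕ} {u : Fin (M+1) → ℤ} (h : hasPerm (M+1) u) :
    hasPerm M (remFn (posOf u) u) := by
  obtain ⟨e, he⟩ := h
  have hval : (u (e.symm (Fin.last M))).natAbs = M + 1 := by
    rw [he]; simp
  have hp := posOf_eq ⟨e, he⟩ _ hval
  refine ⟨remPerm e, fun i => ?_⟩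
  have := remPerm_apply e i
  unfold remFn
  rw [hp]
  unfold remg at this
  split_ifs with h1
  · rw [he]
    congr 1
    rw [this, if_pos h1]
  · rw [he]
    congr 1
    rw [this, if_neg h1]

lemma insFn_remFn {M : ℕ} {u : Fin (M+1) → ℤ} (h : hasPerm (M+1) u)
    (hpos : 1 ≤ posOf u) :
    insFn ⟨posOf u - 1, by have := posOf_le h; omega⟩
      (u ⟨posOf u, Nat.lt_succ_of_le (posOf_le h)⟩) (remFn (posOf u) u) = u := by
  have hle := posOf_le h
  funext i
  have hi := i.2
  unfold insFn remFn
  simp only [Fin.val_mk, Fin.coe_castSucc, Fin.val_succ]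
  split_ifs
  all_goals
    first
    | rfl
    | omega
    | (congr 1; apply Fin.ext; simp only [Fin.val_mk, Fin.coe_castSucc, Fin.val_succ]; omega)
    | (exfalso; omega)

end St16

namespace St16

def xv (M : ℕ) (s : Bool) : ℤ := if s then -((M:ℤ)+1) else (M:ℤ)+1

lemma xv_natAbs (M : ℕ) (s : Bool) : (xv M s).natAbs = M + 1 := by
  unfold xv; split_ifs <;> omega

lemma nword_natAbs_le {M : ℕ} {v : Fin M → ℤ} (hv : hasPerm M v) (r : ℕ) :
    (nword M v r).natAbs ≤ M := by
  unfold nword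
  split_ifs with h
  · exact natAbs_le hv _
  · simp

lemma Bpoly_eq (M : ℕ) (k : ℤ) :
    Bpoly M k = ∑ u ∈ SPset M k, Polynomial.X ^ (dcount M (nword M u)) := by
  unfold Bpoly SPset
  rw [Finset.sum_image (fun p _ q _ h => F_inj h)]
  apply Finset.sum_congr rfl
  intro p _
  rw [desB_eq]

lemma insFn_zero {M : ℕ} (hM : 1 ≤ M) (j : Fin M) (x : ℤ) (v : Fin M → ℤ) :
    insFn j x v ⟨0, by omega⟩ = v ⟨0, hM⟩ := by
  unfold insFn
  simp only [Fin.val_mk]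
  rw [dif_pos (Nat.zero_le _)]

lemma remFn_zero {M : ℕ} (hM : 1 ≤ M) {u : Fin (M+1) → ℤ} (hpos : 1 ≤ posOf u) :
    remFn (posOf u) u ⟨0, hM⟩ = u ⟨0, by omega⟩ := by
  unfold remFn
  rw [if_pos (by show 0 < posOf u; omega)]
  congr 1

lemma xv_decide {M : ℕ} {z : ℤ} (hz : z.natAbs = M + 1) :
    xv M (decide (z < 0)) = z := by
  unfold xv
  rcases Int.natAbs_eq z with h | h <;> split_ifs with hc <;> simp at hc <;> omega

lemma step1 (M : ℕ) (hM : 1 ≤ M) (κ : ℤ) (hκ1 : 1 ≤ κ.natAbs) (hκ2 : κ.natAbs ≤ M) :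
    ∑ u ∈ SPset (M+1) κ, (Polynomial.X : Polynomial ℚ) ^ (dcount (M+1) (nword (M+1) u))
    = ∑ v ∈ SPset M κ, ∑ js : Fin M × Bool,
        (Polynomial.X : Polynomial ℚ) ^
          (dcount (M+1) (nword (M+1) (insFn js.1 (xv M js.2) v))) := by
  have hM1 : (1:ℕ) ≤ M + 1 := by omega
  rw [← Finset.sum_product']
  symm
  refine Finset.sum_bij'
    (fun a _ => insFn a.2.1 (xv M a.2.2) a.1)
    (fun u hu => (remFn (posOf u) u,
      (⟨posOf u - 1, by
        have h := ((mem_SPset hM1 κ u).1 hu).1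
        have := posOf_le h; omega⟩,
       decide (u ⟨posOf u, by
        have h := ((mem_SPset hM1 κ u).1 hu).1
        have := posOf_le h; omega⟩ < 0))))
    ?_ ?_ ?_ ?_ ?_
  · -- membership forward
    rintro ⟨v, j, s⟩ ha
    rw [Finset.mem_product] at ha
    have hv := (mem_SPset hM κ v).1 ha.1
    rw [mem_SPset hM1]
    refine ⟨hasPerm_insFn hv.1 j (xv_natAbs M s), ?_⟩
    show insFn j (xv M s) v ⟨0, hM1⟩ = κ
    rw [insFn_zero hM]
    exact hv.2
  · -- membership backward
    intro u hu
    have hu' := (mem_SPset hM1 κ u).1 hu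
    rw [Finset.mem_product]
    constructor
    · rw [mem_SPset hM]
      refine ⟨hasPerm_remFn hu'.1, ?_⟩
      have hpos : 1 ≤ posOf u := by
        apply posOf_pos hu'.1
        rw [show (⟨0, Nat.succ_pos M⟩ : Fin (M+1)) = ⟨0, by omega⟩ from rfl, hu'.2]
        exact hκ2
      show remFn (posOf u) u ⟨0, hM⟩ = κ
      rw [remFn_zero hM hpos]
      exact hu'.2
    · exact Finset.mem_univ _
  · -- left inverse
    rintro ⟨v, j, s⟩ ha
    rw [Finset.mem_product] at ha
    have hv := (mem_SPset hM κ v).1 ha.1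
    have hpos := posOf_insFn hv.1 j (xv_natAbs M s)
    apply Prod.ext
    · simp only
      rw [hpos]
      exact remFn_insFn j (xv M s) v
    · apply Prod.ext
      · apply Fin.ext
        simp only [Fin.val_mk]
        rw [hpos]
        omega
      · simp only
        have heq : (⟨posOf (insFn j (xv M s) v), by rw [hpos]; have := j.2; omega⟩ : Fin (M+1))
            = ⟨(j:ℕ)+1, by have := j.2; omega⟩ := by
          apply Fin.ext; simp only [Fin.val_mk]; rw [hpos]
        have e1 : insFn j (xv M s) v
            ⟨posOf (insFn j (xv M s) v), by rw [hpos]; have := j.2; omega⟩ = xv M s :=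
          (congrArg _ heq).trans (insFn_natAbs_at j (xv M s) v)
        have e2 := congrArg (fun z : ℤ => decide (z < 0)) e1
        refine e2.trans ?_
        cases s <;> simp [xv] <;> omega
  · -- right inverse
    intro u hu
    have hu' := (mem_SPset hM1 κ u).1 hu
    have hpos : 1 ≤ posOf u := by
      apply posOf_pos hu'.1
      rw [show (⟨0, Nat.succ_pos M⟩ : Fin (M+1)) = ⟨0, by omega⟩ from rfl, hu'.2]
      exact hκ2
    simp only
    rw [xv_decide (posOf_natAbs hu'.1)]
    exact insFn_remFn hu'.1 hpos
  · -- values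
    rintro ⟨v, j, s⟩ _
    rfl

end St16

namespace St16

lemma nword_zero {M : ℕ} (v : Fin M → ℤ) : nword M v 0 = 0 := by
  unfold nword
  rw [dif_neg (by omega)]

lemma nword_one {M : ℕ} (hM : 1 ≤ M) (v : Fin M → ℤ) : nword M v 1 = v ⟨0, hM⟩ := by
  unfold nword
  rw [dif_pos ⟨le_refl 1, hM⟩]

lemma dcount_insFn_false {M : ℕ} {v : Fin M → ℤ} (hv : hasPerm M v) (j : Fin M) :
    dcount (M+1) (nword (M+1) (insFn j (xv M false) v)) =
      if (j:ℕ) + 2 ≤ M then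
        (if nword M v ((j:ℕ)+2) < nword M v ((j:ℕ)+1) then dcount M (nword M v)
         else dcount M (nword M v) + 1)
      else dcount M (nword M v) := by
  have hj := j.2
  have hins := dcount_insert (nword M v) (nword (M+1) (insFn j (xv M false) v)) M ((j:ℕ)+2)
    (xv M false) (by omega) (by omega) (fun r hr => nword_insFn j (xv M false) v r hr)
  rw [show (j:ℕ)+2-1 = (j:ℕ)+1 from by omega] at hins
  have hb1 := nword_natAbs_le hv ((j:ℕ)+1)
  have hb2 := nword_natAbs_le hv ((j:ℕ)+2)
  have hx : xv M false = (M:ℤ)+1 := rfl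
  rw [hx] at hins ⊢
  split_ifs at hins ⊢ <;> omega

lemma dcount_insFn_true {M : ℕ} {v : Fin M → ℤ} (hv : hasPerm M v) (j : Fin M) :
    dcount (M+1) (nword (M+1) (insFn j (xv M true) v)) =
      if (j:ℕ) + 2 ≤ M then
        (if nword M v ((j:ℕ)+2) < nword M v ((j:ℕ)+1) then dcount M (nword M v)
         else dcount M (nword M v) + 1)
      else dcount M (nword M v) + 1 := by
  have hj := j.2
  have hins := dcount_insert (nword M v) (nword (M+1) (insFn j (xv M true) v)) M ((j:ℕ)+2)
    (xv M true) (by omega) (by omega) (fun r hr => nword_insFn j (xv M true) v r hr)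
  rw [show (j:ℕ)+2-1 = (j:ℕ)+1 from by omega] at hins
  have hb1 := nword_natAbs_le hv ((j:ℕ)+1)
  have hb2 := nword_natAbs_le hv ((j:ℕ)+2)
  have hx : xv M true = -((M:ℤ)+1) := rfl
  rw [hx] at hins ⊢
  split_ifs at hins ⊢ <;> omega

end St16

namespace St16

noncomputable def Dv (M : ℕ) (v : Fin M → ℤ) : ℕ :=
  ((Finset.range (M-1)).filter (fun r => nword M v (r+2) < nword M v (r+1))).card

lemma Dv_le (M : ℕ) (v : Fin M → ℤ) : Dv M v ≤ M - 1 := by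
  unfold Dv
  calc _ ≤ (Finset.range (M-1)).card := Finset.card_filter_le _ _
  _ = M - 1 := Finset.card_range _

lemma dcount_eq_Dv {M : ℕ} (hM : 1 ≤ M) (v : Fin M → ℤ) :
    dcount M (nword M v) = Dv M v + (if nword M v 1 < 0 then 1 else 0) := by
  obtain ⟨M', rfl⟩ : ∃ M', M = M' + 1 := ⟨M - 1, by omega⟩
  rw [dcount_sum, Finset.sum_range_succ']
  rw [nword_zero]
  unfold Dv
  rw [Finset.card_filter]
  simp only [Nat.add_sub_cancel]

lemma sum_js {M : ℕ} (hM : 1 ≤ M) {v : Fin M → ℤ} (hv : hasPerm M v) :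
    ∑ js : Fin M × Bool,
        (Polynomial.X : Polynomial ℚ) ^
          (dcount (M+1) (nword (M+1) (insFn js.1 (xv M js.2) v)))
    = (Polynomial.X : Polynomial ℚ) ^ (dcount M (nword M v))
      + Polynomial.X ^ (dcount M (nword M v) + 1)
      + 2 * ((Dv M v) • (Polynomial.X : Polynomial ℚ) ^ (dcount M (nword M v))
             + (M - 1 - Dv M v) • (Polynomial.X : Polynomial ℚ) ^ (dcount M (nword M v) + 1)) := by
  set d := dcount M (nword M v) with hd
  set w := nword M v with hw
  rw [Fintype.sum_prod_type]
  have hterm : ∀ j : Fin M,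
      (∑ s : Bool, (Polynomial.X : Polynomial ℚ) ^
          (dcount (M+1) (nword (M+1) (insFn j (xv M s) v))))
      = (if (j:ℕ) + 2 ≤ M then
          2 * (if w ((j:ℕ)+2) < w ((j:ℕ)+1) then (Polynomial.X : Polynomial ℚ)^d else Polynomial.X^(d+1))
        else (Polynomial.X^d + Polynomial.X^(d+1))) := by
    intro j
    rw [Fintype.sum_bool]
    rw [dcount_insFn_false hv j, dcount_insFn_true hv j]
    split_ifs <;> ring
  rw [Finset.sum_congr rfl (fun j _ => hterm j)]
  rw [Fin.sum_univ_eq_sum_range (fun r : ℕ => if r + 2 ≤ M then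
          2 * (if w (r+2) < w (r+1) then (Polynomial.X : Polynomial ℚ)^d else Polynomial.X^(d+1))
        else (Polynomial.X^d + Polynomial.X^(d+1))) M]
  obtain ⟨M', rfl⟩ : ∃ M', M = M' + 1 := ⟨M - 1, by omega⟩
  rw [Finset.sum_range_succ]
  rw [if_neg (by omega : ¬ (M' + 2 ≤ M' + 1))]
  have e1 : ∑ r ∈ Finset.range M',
      (if r + 2 ≤ M' + 1 then
          2 * (if w (r+2) < w (r+1) then (Polynomial.X : Polynomial ℚ)^d else Polynomial.X^(d+1))
        else (Polynomial.X^d + Polynomial.X^(d+1)))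
      = 2 * ((Dv (M'+1) v) • (Polynomial.X : Polynomial ℚ)^d
          + ((M'+1) - 1 - Dv (M'+1) v) • (Polynomial.X : Polynomial ℚ)^(d+1)) := by
    have e2 : ∀ r ∈ Finset.range M',
        (if r + 2 ≤ M' + 1 then
          2 * (if w (r+2) < w (r+1) then (Polynomial.X : Polynomial ℚ)^d else Polynomial.X^(d+1))
        else (Polynomial.X^d + Polynomial.X^(d+1)))
        = 2 * (if w (r+2) < w (r+1) then (Polynomial.X : Polynomial ℚ)^d else Polynomial.X^(d+1)) := by
      intro r hr
      rw [Finset.mem_range] at hr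
      rw [if_pos (by omega)]
    rw [Finset.sum_congr rfl e2, ← Finset.mul_sum]
    congr 1
    rw [Finset.sum_ite]
    rw [Finset.sum_const, Finset.sum_const]
    unfold Dv
    simp only [Nat.add_sub_cancel]
    rw [← hw]
    have h2 := Finset.card_filter_add_card_filter_not
      (s := Finset.range M') (p := fun r => w (r+2) < w (r+1))
    rw [Finset.card_range] at h2
    have h3 : (Finset.filter (fun a => ¬ (w (a+2) < w (a+1))) (Finset.range M')).card
        = M' - (Finset.filter (fun r => w (r+2) < w (r+1)) (Finset.range M')).card := by
      omega
    rw [h3]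
  rw [e1]
  ring
end St16

namespace St16

lemma alg_pos (M d : ℕ) (hM : 1 ≤ M) (hd : d ≤ M - 1) :
    (Polynomial.X : Polynomial ℚ)^d + Polynomial.X^(d+1)
      + 2*(d • (Polynomial.X : Polynomial ℚ)^d + (M-1-d) • (Polynomial.X : Polynomial ℚ)^(d+1))
    = (1 + Polynomial.C (2*(M:ℚ)-1) * Polynomial.X) * Polynomial.X^d
      + 2 * Polynomial.X * (1 - Polynomial.X) * Polynomial.derivative (Polynomial.X^d) := by
  rw [nsmul_eq_mul, nsmul_eq_mul, Polynomial.derivative_X_pow]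
  rw [Nat.cast_sub hd, Nat.cast_sub hM]
  simp only [map_sub, map_mul, map_one, map_ofNat, map_natCast, Nat.cast_one]
  cases d with
  | zero => simp; ring
  | succ e =>
    simp only [Nat.add_sub_cancel]
    push_cast
    ring

lemma alg_neg (M d : ℕ) (hM : 1 ≤ M) (hd : d ≤ M - 1) :
    (Polynomial.X : Polynomial ℚ)^(d+1) + Polynomial.X^(d+1+1)
      + 2*(d • (Polynomial.X : Polynomial ℚ)^(d+1) + (M-1-d) • (Polynomial.X : Polynomial ℚ)^(d+1+1))
    = (Polynomial.C (2*(M:ℚ)+1) * Polynomial.X - 1) * Polynomial.X^(d+1)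
      + 2 * Polynomial.X * (1 - Polynomial.X) * Polynomial.derivative (Polynomial.X^(d+1)) := by
  rw [nsmul_eq_mul, nsmul_eq_mul, Polynomial.derivative_X_pow]
  rw [Nat.cast_sub hd, Nat.cast_sub hM]
  simp only [map_sub, map_add, map_mul, map_one, map_ofNat, map_natCast, Nat.cast_one,
    Nat.add_sub_cancel]
  push_cast
  ring

lemma key_pos (M : ℕ) (hM : 1 ≤ M) (κ : ℤ) (h1 : 0 < κ) (h2 : κ.natAbs ≤ M) :
    Bpoly (M+1) κ = (1 + Polynomial.C (2*(M:ℚ)-1) * Polynomial.X) * Bpoly M κ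
      + 2 * Polynomial.X * (1 - Polynomial.X) * Polynomial.derivative (Bpoly M κ) := by
  rw [Bpoly_eq (M+1) κ, step1 M hM κ (by omega) h2, Bpoly_eq M κ]
  rw [map_sum, Finset.mul_sum, Finset.mul_sum, ← Finset.sum_add_distrib]
  apply Finset.sum_congr rfl
  intro v hv
  obtain ⟨hv1, hv2⟩ := (mem_SPset hM κ v).1 hv
  rw [sum_js hM hv1]
  have hκ : ¬ (nword M v 1 < 0) := by
    rw [nword_one hM, hv2]; omega
  rw [dcount_eq_Dv hM v, if_neg hκ, add_zero]
  exact alg_pos M (Dv M v) hM (Dv_le M v)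

lemma key_neg (M : ℕ) (hM : 1 ≤ M) (κ : ℤ) (h1 : κ < 0) (h2 : κ.natAbs ≤ M) :
    Bpoly (M+1) κ = (Polynomial.C (2*(M:ℚ)+1) * Polynomial.X - 1) * Bpoly M κ
      + 2 * Polynomial.X * (1 - Polynomial.X) * Polynomial.derivative (Bpoly M κ) := by
  rw [Bpoly_eq (M+1) κ, step1 M hM κ (by omega) h2, Bpoly_eq M κ]
  rw [map_sum, Finset.mul_sum, Finset.mul_sum, ← Finset.sum_add_distrib]
  apply Finset.sum_congr rfl
  intro v hv
  obtain ⟨hv1, hv2⟩ := (mem_SPset hM κ v).1 hv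
  rw [sum_js hM hv1]
  have hκ : nword M v 1 < 0 := by
    rw [nword_one hM, hv2]; omega
  rw [dcount_eq_Dv hM v, if_pos hκ]
  exact alg_neg M (Dv M v) hM (Dv_le M v)

end St16

/-- For `n ≥ 2` and `1 ≤ k ≤ n-1`, the differential recurrences
`B_{n,k}(t) = [1+(2n-3)t]·B_{n-1,k}(t) + 2t(1-t)·B'_{n-1,k}(t)` and
`B_{n,-k}(t) = [(2n-1)t-1]·B_{n-1,-k}(t) + 2t(1-t)·B'_{n-1,-k}(t)`. -/
theorem stmt16 (n k : ℕ) (hn : 2 ≤ n) (hk1 : 1 ≤ k) (hk2 : k ≤ n - 1) :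
    (Bpoly n (k : ℤ) =
      (1 + Polynomial.C (2 * (n : ℚ) - 3) * Polynomial.X) * Bpoly (n - 1) (k : ℤ) +
        2 * Polynomial.X * (1 - Polynomial.X) *
          Polynomial.derivative (Bpoly (n - 1) (k : ℤ))) ∧
    (Bpoly n (-(k : ℤ)) =
      (Polynomial.C (2 * (n : ℚ) - 1) * Polynomial.X - 1) * Bpoly (n - 1) (-(k : ℤ)) +
        2 * Polynomial.X * (1 - Polynomial.X) *
          Polynomial.derivative (Bpoly (n - 1) (-(k : ℤ)))) := by
  obtain ⟨m, rfl⟩ : ∃ m, n = m + 2 := ⟨n - 2, by omega⟩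
  have hsub : m + 2 - 1 = (m + 1) := rfl
  have hM : 1 ≤ m + 1 := by omega
  have habs : ((k:ℤ)).natAbs ≤ m + 1 := by omega
  have hCpos : (2 * ((m:ℚ)+2) - 3) = 2*(((m+1:ℕ)):ℚ)-1 := by push_cast; ring
  have hCneg : (2 * ((m:ℚ)+2) - 1) = 2*(((m+1:ℕ)):ℚ)+1 := by push_cast; ring
  constructor
  · have := St16.key_pos (m+1) hM (k:ℤ) (by omega) habs
    rw [hsub]
    rw [show ((m+2:ℕ):ℚ) = (m:ℚ)+2 by push_cast; ring, hCpos]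
    exact this
  · have := St16.key_neg (m+1) hM (-(k:ℤ)) (by omega) (by omega)
    rw [hsub]
    rw [show ((m+2:ℕ):ℚ) = (m:ℚ)+2 by push_cast; ring, hCneg]
    exact this
end

section
/- For every positive integer n and every k with 1 ≤ k ≤ n, the polynomial \overline{B}_{n,k}(t) = B_{n,k}(t) + B_{n,-k}(t) is palindromic with center n/2 (its coefficient of t^i equals its coefficient of t^{n-i} for all 0 ≤ i ≤ n), and the polynomial \widetilde{B}_{n,k}(t) = t·B_{n,k}(t) + B_{n,-k}(t) is palindromic with center (n+1)/2 (its coefficient of t^i equals its coefficient of t^{n+1-i} for all 0 ≤ i ≤ n+1). -/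
open Finset Polynomial

-- auxiliary
def negp {n : ℕ} (p : Equiv.Perm (Fin n) × (Fin n → Bool)) :
    Equiv.Perm (Fin n) × (Fin n → Bool) := (p.1, fun i => !p.2 i)

lemma negp_negp {n : ℕ} (p : Equiv.Perm (Fin n) × (Fin n → Bool)) : negp (negp p) = p := by
  simp [negp]

lemma sval_negp {n : ℕ} (p : Equiv.Perm (Fin n) × (Fin n → Bool)) (i : ℤ) :
    sval (negp p) i = - sval p i := by
  have e1 : (negp p).1 = p.1 := rfl
  have e2 : (negp p).2 = fun j => !p.2 j := rfl
  simp only [sval, e1, e2]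
  by_cases h1 : 1 ≤ i ∧ i ≤ (n:ℤ)
  · rw [dif_pos h1, dif_pos h1]
    cases hb : p.2 ⟨(i-1).toNat, by omega⟩ <;> simp [hb] <;> ring
  · rw [dif_neg h1, dif_neg h1]
    by_cases h2 : 1 ≤ -i ∧ -i ≤ (n:ℤ)
    · rw [dif_pos h2, dif_pos h2]
      cases hb : p.2 ⟨(-i-1).toNat, by omega⟩ <;> simp [hb] <;> ring
    · rw [dif_neg h2, dif_neg h2]; ring

lemma sval_spec {n : ℕ} (p : Equiv.Perm (Fin n) × (Fin n → Bool)) (j : ℤ)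
    (h : 1 ≤ j ∧ j ≤ (n : ℤ)) :
    sval p j = (if p.2 ⟨(j - 1).toNat, by omega⟩ then -1 else 1) *
      (((p.1 ⟨(j - 1).toNat, by omega⟩ : Fin n) : ℕ) + 1) := by
  simp only [sval]; rw [dif_pos h]

lemma sval_abs {n : ℕ} (p : Equiv.Perm (Fin n) × (Fin n → Bool)) (j : ℤ)
    (h : 1 ≤ j ∧ j ≤ (n : ℤ)) :
    |sval p j| = ((p.1 ⟨(j - 1).toNat, by omega⟩ : Fin n) : ℕ) + 1 := by
  rw [sval_spec p j h]
  cases hb : p.2 ⟨(j - 1).toNat, by omega⟩ <;> simp [hb] <;>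
    [positivity; (rw [show (-1 + -((p.1 ⟨j.toNat - 1, by omega⟩ : Fin n):ℕ) : ℤ) = -(((p.1 ⟨j.toNat - 1, by omega⟩ : Fin n):ℕ) + 1) from by ring, abs_neg, abs_of_nonneg (by positivity)])]

lemma sval_zero {n : ℕ} (p : Equiv.Perm (Fin n) × (Fin n → Bool)) : sval p 0 = 0 := by
  simp [sval]

lemma sval_inj {n : ℕ} (p : Equiv.Perm (Fin n) × (Fin n → Bool)) (j1 j2 : ℤ)
    (h1 : 1 ≤ j1 ∧ j1 ≤ (n : ℤ)) (h2 : 1 ≤ j2 ∧ j2 ≤ (n : ℤ))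
    (h : sval p j1 = sval p j2) : j1 = j2 := by
  have ha := sval_abs p j1 h1
  have hb := sval_abs p j2 h2
  rw [h, hb] at ha
  have : p.1 ⟨(j2 - 1).toNat, by omega⟩ = p.1 ⟨(j1 - 1).toNat, by omega⟩ := by
    have hnat : ((p.1 ⟨(j2 - 1).toNat, by omega⟩ : Fin n) : ℕ) =
        ((p.1 ⟨(j1 - 1).toNat, by omega⟩ : Fin n) : ℕ) := by omega
    exact Fin.ext hnat
  have h2' := p.1.injective this
  simp only [Fin.mk.injEq] at h2'
  omega

lemma sval_ne_succ {n : ℕ} (p : Equiv.Perm (Fin n) × (Fin n → Bool)) (i : Fin n) :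
    sval p ((i : ℕ) : ℤ) ≠ sval p (((i : ℕ) : ℤ) + 1) := by
  intro h
  rcases Nat.eq_zero_or_pos (i : ℕ) with h0 | h0
  · rw [h0] at h
    push_cast at h
    rw [sval_zero] at h
    have hpos : 0 < n := lt_of_le_of_lt (Nat.zero_le _) i.isLt
    have := sval_abs p 1 ⟨le_refl 1, by exact_mod_cast hpos⟩
    rw [← h] at this
    simp at this
    omega
  · have hlt := i.isLt
    have := sval_inj p ((i : ℕ) : ℤ) (((i : ℕ) : ℤ) + 1)
      ⟨by exact_mod_cast h0, by exact_mod_cast le_of_lt hlt⟩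
      ⟨by omega, by exact_mod_cast hlt⟩ h
    omega

lemma desB_le {n : ℕ} (p : Equiv.Perm (Fin n) × (Fin n → Bool)) : desB p ≤ n := by
  classical
  calc desB p ≤ (univ : Finset (Fin n)).card := Finset.card_filter_le _ _
  _ = n := by simp

lemma desB_negp {n : ℕ} (p : Equiv.Perm (Fin n) × (Fin n → Bool)) :
    desB (negp p) = n - desB p := by
  classical
  unfold desB
  have : (Finset.univ.filter (fun i : Fin n =>
      sval (negp p) (((i : ℕ) : ℤ) + 1) < sval (negp p) ((i : ℕ) : ℤ))) =
      (Finset.univ.filter (fun i : Fin n =>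
      ¬ (sval p (((i : ℕ) : ℤ) + 1) < sval p ((i : ℕ) : ℤ)))) := by
    apply Finset.filter_congr
    intro i _
    simp only [sval_negp, neg_lt_neg_iff, not_lt]
    constructor
    · intro hlt
      exact le_of_lt hlt
    · intro hle
      exact lt_of_le_of_ne hle (sval_ne_succ p i)
  rw [this, Finset.filter_not, Finset.card_sdiff_of_subset (Finset.filter_subset _ _)]
  simp

noncomputable def Ncard (n : ℕ) (k : ℤ) (i : ℕ) : ℕ :=
  ((Finset.univ : Finset (Equiv.Perm (Fin n) × (Fin n → Bool))).filter
    (fun p => sval p 1 = k ∧ desB p = i)).card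

lemma coeff_Bpoly (n : ℕ) (k : ℤ) (i : ℕ) :
    (Bpoly n k).coeff i = (Ncard n k i : ℚ) := by
  classical
  unfold Bpoly Ncard
  rw [Polynomial.finset_sum_coeff]
  simp only [Polynomial.coeff_X_pow]
  rw [Finset.sum_boole, Finset.filter_filter]
  congr 2
  apply Finset.filter_congr
  intro p _
  simp [eq_comm]

lemma Ncard_zero (n : ℕ) (k : ℤ) (i : ℕ) (hi : n < i) : Ncard n k i = 0 := by
  unfold Ncard
  rw [Finset.card_eq_zero, Finset.filter_eq_empty_iff]
  intro p _
  rintro ⟨-, hd⟩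
  have := desB_le p
  omega

lemma Ncard_symm (n : ℕ) (k : ℤ) (i : ℕ) (hi : i ≤ n) :
    Ncard n (-k) i = Ncard n k (n - i) := by
  classical
  unfold Ncard
  apply Finset.card_nbij' (i := negp) (j := negp)
  · intro p hp
    simp only [Finset.coe_filter, Finset.mem_coe, Set.mem_setOf_eq, Finset.mem_filter, Finset.mem_univ, true_and] at hp ⊢
    obtain ⟨h1, h2⟩ := hp
    refine ⟨?_, ?_⟩
    · rw [sval_negp, h1]; ring
    · rw [desB_negp, h2]
  · intro p hp
    simp only [Finset.coe_filter, Finset.mem_coe, Set.mem_setOf_eq, Finset.mem_filter, Finset.mem_univ, true_and] at hp ⊢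
    obtain ⟨h1, h2⟩ := hp
    have hle := desB_le p
    refine ⟨?_, ?_⟩
    · rw [sval_negp, h1]
    · rw [desB_negp, h2]; omega
  · intro p _; exact negp_negp p
  · intro p _; exact negp_negp p


/-- For `1 ≤ k ≤ n`: `\overline{B}_{n,k}(t) = B_{n,k}(t) + B_{n,-k}(t)` is palindromic with
center `n/2`, and `\widetilde{B}_{n,k}(t) = t·B_{n,k}(t) + B_{n,-k}(t)` is palindromic with
center `(n+1)/2`. -/
theorem stmt17 (n k : ℕ) (hn : 1 ≤ n) (hk1 : 1 ≤ k) (hk2 : k ≤ n) :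
    (∀ i : ℕ, i ≤ n →
      (Bpoly n (k : ℤ) + Bpoly n (-(k : ℤ))).coeff i =
        (Bpoly n (k : ℤ) + Bpoly n (-(k : ℤ))).coeff (n - i)) ∧
    (∀ i : ℕ, i ≤ n + 1 →
      (Polynomial.X * Bpoly n (k : ℤ) + Bpoly n (-(k : ℤ))).coeff i =
        (Polynomial.X * Bpoly n (k : ℤ) + Bpoly n (-(k : ℤ))).coeff (n + 1 - i)) := by
  constructor
  · intro i hi
    rw [Polynomial.coeff_add, Polynomial.coeff_add, coeff_Bpoly, coeff_Bpoly,
      coeff_Bpoly, coeff_Bpoly, Ncard_symm n (k : ℤ) i hi,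
      Ncard_symm n (k : ℤ) (n - i) (by omega), show n - (n - i) = i from by omega]
    ring
  · intro i hi
    have hXc : ∀ (f : Polynomial ℚ) (j : ℕ), (Polynomial.X * f).coeff j =
        if j = 0 then 0 else f.coeff (j - 1) := by
      intro f j
      rcases j with _ | j
      · simp
      · rw [Polynomial.coeff_X_mul]
        simp
    rw [Polynomial.coeff_add, Polynomial.coeff_add, hXc, hXc, coeff_Bpoly, coeff_Bpoly]
    rcases Nat.eq_zero_or_pos i with h0 | h0
    · subst h0
      rw [if_pos rfl, if_neg (by omega)]
      simp only [Nat.sub_zero, Nat.add_sub_cancel]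
      rw [coeff_Bpoly, Ncard_symm n (k : ℤ) 0 (by omega), coeff_Bpoly,
        Ncard_zero n (-(k:ℤ)) (n + 1) (by omega), Nat.sub_zero]
      push_cast
      ring
    · rw [if_neg (by omega)]
      rcases Nat.lt_or_ge i (n + 1) with hlt | hge
      · -- 1 ≤ i ≤ n
        rw [if_neg (by omega), coeff_Bpoly, coeff_Bpoly,
          Ncard_symm n (k : ℤ) i (by omega),
          Ncard_symm n (k : ℤ) (n + 1 - i) (by omega),
          show n - (n + 1 - i) = i - 1 from by omega,
          show n + 1 - i - 1 = n - i from by omega]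
        ring
      · -- i = n + 1
        have : i = n + 1 := by omega
        subst this
        rw [if_pos (by omega), Ncard_zero n (-(k:ℤ)) (n + 1) (by omega),
          show n + 1 - 1 = n from by omega, show n + 1 - (n + 1) = 0 from by omega,
          coeff_Bpoly, Ncard_symm n (k : ℤ) 0 (by omega), Nat.sub_zero]
        push_cast
        ring
end

section
/- For every integer n ≥ 1, the type B Eulerian polynomial B_n(t) = Σ_{π ∈ 𝔅_n} t^{des_B(π)} satisfies the Carlitz-type identity of formal power series in ℚ[[t]]: B_n(t) = (1-t)^{n+1} · Σ_{k≥0} (2k+1)^n t^k. -/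
open Finset Polynomial

/-- The type B Eulerian polynomial `B_n(t) = ∑_{π ∈ 𝔅_n} t^{des_B(π)}`. -/
noncomputable def BpolyTotal (n : ℕ) : Polynomial ℚ :=
  ∑ p : Equiv.Perm (Fin n) × (Fin n → Bool), Polynomial.X ^ desB p

-- ===== auxiliary development =====

abbrev SP (n : ℕ) := Equiv.Perm (Fin n) × (Fin n → Bool)

def gval {n : ℕ} (p : SP n) (k : ℕ) : ℤ :=
  if h : k < n then (if p.2 ⟨k, h⟩ then -1 else 1) * ((p.1 ⟨k, h⟩ : ℕ) + 1) else 0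

def aval {n : ℕ} (p : SP n) (k : ℕ) : ℤ := if k = 0 then 0 else gval p (k - 1)

def desc {n : ℕ} (p : SP n) (k : ℕ) : Prop := aval p (k + 1) < aval p k

instance {n : ℕ} (p : SP n) : DecidablePred (desc p) := fun _ => by
  unfold desc; infer_instance

def dnum {n : ℕ} (p : SP n) : ℕ := ((range n).filter (desc p)).card

def cfun {n : ℕ} (p : SP n) (k : ℕ) : ℕ := ((range (k + 1)).filter (desc p)).card

variable {n m : ℕ}

lemma sval_eq (p : SP n) (k : ℕ) (hk : k ≤ n) : sval p (k : ℤ) = aval p k := by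
  match k with
  | 0 => simp [sval, aval]
  | (j + 1) =>
    have h : 1 ≤ ((j + 1 : ℕ) : ℤ) ∧ ((j + 1 : ℕ) : ℤ) ≤ (n : ℤ) := by push_cast; omega
    unfold sval
    rw [dif_pos h]
    have hj : (((j + 1 : ℕ) : ℤ) - 1).toNat = j := by push_cast; omega
    have hjn : j < n := by omega
    simp only [hj]
    have hjn : j < n := by omega
    have hav : aval p (j + 1) = gval p j := by simp [aval]
    rw [hav]
    unfold gval
    rw [dif_pos hjn]

lemma desB_eq_dnum (p : SP n) : desB p = dnum p := by
  unfold desB dnum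
  rw [card_filter, card_filter, ← Fin.sum_univ_eq_sum_range (fun k => if desc p k then 1 else 0)]
  refine Finset.sum_congr rfl fun i _ => if_congr ?_ rfl rfl
  have h1 : sval p (((i : ℕ) : ℤ) + 1) = aval p ((i : ℕ) + 1) := by
    have := sval_eq p ((i : ℕ) + 1) (by omega)
    push_cast at this ⊢
    exact this
  have h2 : sval p ((i : ℕ) : ℤ) = aval p (i : ℕ) := sval_eq p (i : ℕ) (by omega)
  rw [h1, h2]
  rfl

-- cfun / dnum lemmas

lemma desc_lt (p : SP n) {k : ℕ} (h : desc p k) : True := trivial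

lemma cfun_zero (p : SP n) : cfun p 0 = if desc p 0 then 1 else 0 := by
  unfold cfun
  rw [range_one, filter_singleton]
  split <;> simp

lemma cfun_succ (p : SP n) (k : ℕ) :
    cfun p (k + 1) = cfun p k + (if desc p (k + 1) then 1 else 0) := by
  unfold cfun
  rw [range_add_one, filter_insert]
  split
  · rw [card_insert_of_notMem (by simp)]
  · simp

lemma cfun_le (p : SP n) (k : ℕ) : cfun p k ≤ k + 1 :=
  le_trans (card_filter_le _ _) (by rw [card_range])

lemma dnum_le_n (p : SP n) : dnum p ≤ n :=
  le_trans (card_filter_le _ _) (by rw [card_range])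

lemma cfun_le_dnum (p : SP n) {k : ℕ} (h : k < n) : cfun p k ≤ dnum p :=
  card_le_card (filter_subset_filter _ (by rw [range_subset_range]; omega))

lemma dnum_le_cfun (p : SP n) {k : ℕ} (h : k < n) : dnum p ≤ cfun p k + (n - 1 - k) := by
  unfold dnum cfun
  have hsplit : range n = range (k + 1) ∪ Ico (k + 1) n := by
    simp only [range_eq_Ico]
    exact (Finset.Ico_union_Ico_eq_Ico (by omega) (by omega)).symm
  rw [hsplit, filter_union]
  refine le_trans (card_union_le _ _) ?_
  have h2 : ((Ico (k + 1) n).filter (desc p)).card ≤ n - 1 - k := by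
    refine le_trans (card_filter_le _ _) ?_
    rw [Nat.card_Ico]; omega
  omega

-- Lam and adm

def Lam (l : Fin n → Fin (m + 1)) (k : ℕ) : ℕ :=
  if h : 1 ≤ k ∧ k ≤ n then (l ⟨k - 1, by omega⟩ : ℕ) else 0

def adm (p : SP n) (l : Fin n → Fin (m + 1)) : Prop :=
  ∀ k, k < n → (Lam l k ≤ Lam l (k + 1)) ∧ (desc p k → Lam l k < Lam l (k + 1))

instance (p : SP n) : DecidablePred (adm (m := m) p) := fun _ => by
  unfold adm; infer_instance

lemma Lam_zero (l : Fin n → Fin (m + 1)) : Lam l 0 = 0 := by simp [Lam]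

lemma Lam_succ (l : Fin n → Fin (m + 1)) {k : ℕ} (h : k < n) :
    Lam l (k + 1) = (l ⟨k, h⟩ : ℕ) := by
  unfold Lam
  rw [dif_pos ⟨by omega, by omega⟩]
  congr 1

lemma Lam_le_m (l : Fin n → Fin (m + 1)) (k : ℕ) : Lam l k ≤ m := by
  unfold Lam
  split
  · exact Nat.lt_succ_iff.mp (l _).2
  · omega

lemma adm_mono_aux {p : SP n} {l : Fin n → Fin (m + 1)} (hl : adm p l) :
    ∀ d a, a + d ≤ n → Lam l a ≤ Lam l (a + d) := by
  intro d
  induction d with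
  | zero => intro a _; exact le_rfl
  | succ d ih =>
    intro a h
    have h1 := ih a (by omega)
    have h2 := (hl (a + d) (by omega)).1
    have he : a + d + 1 = a + (d + 1) := by omega
    rw [he] at h2
    exact le_trans h1 (by omega)

lemma adm_mono {p : SP n} {l : Fin n → Fin (m + 1)} (hl : adm p l)
    {a b : ℕ} (hab : a ≤ b) (hbn : b ≤ n) : Lam l a ≤ Lam l b := by
  have := adm_mono_aux hl (b - a) a (by omega)
  have he : a + (b - a) = b := by omega
  rw [he] at this
  exact this

lemma adm_cfun_le {p : SP n} {l : Fin n → Fin (m + 1)} (hl : adm p l) :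
    ∀ k, k < n → cfun p k ≤ Lam l (k + 1) := by
  intro k
  induction k with
  | zero =>
    intro h0
    rw [cfun_zero]
    split
    · have := (hl 0 h0).2 (by assumption)
      rw [Lam_zero] at this; omega
    · omega
  | succ k ih =>
    intro hk
    have h1 := ih (by omega)
    rw [cfun_succ]
    have h2 := hl (k + 1) hk
    rw [Lam_succ (l := l) (show k < n by omega)] at *
    split
    · have := h2.2 (by assumption); omega
    · have := h2.1; omega

-- gval sign lemmas

lemma gval_def (p : SP n) {k : ℕ} (h : k < n) :
    gval p k = (if p.2 ⟨k, h⟩ then -1 else 1) * ((p.1 ⟨k, h⟩ : ℕ) + 1) := by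
  unfold gval; rw [dif_pos h]

lemma gval_ne_zero (p : SP n) {k : ℕ} (h : k < n) : gval p k ≠ 0 := by
  rw [gval_def p h]
  split <;> omega

lemma gval_abs (p : SP n) {k : ℕ} (h : k < n) :
    |gval p k| = ((p.1 ⟨k, h⟩ : ℕ) : ℤ) + 1 := by
  rw [gval_def p h]
  split
  · rw [neg_one_mul, abs_neg, abs_of_nonneg (by positivity)]
  · rw [one_mul, abs_of_nonneg (by positivity)]

lemma gval_neg_iff (p : SP n) {k : ℕ} (h : k < n) :
    gval p k < 0 ↔ p.2 ⟨k, h⟩ = true := by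
  rcases Bool.eq_false_or_eq_true (p.2 ⟨k, h⟩) with hb | hb <;>
      rw [gval_def p h, hb] <;> simp <;> omega

lemma gval_of_true (p : SP n) {k : ℕ} (h : k < n) (hb : p.2 ⟨k, h⟩ = true) :
    gval p k = -(((p.1 ⟨k, h⟩ : ℕ) : ℤ) + 1) := by
  rw [gval_def p h, hb]
  simp

lemma gval_of_false (p : SP n) {k : ℕ} (h : k < n) (hb : p.2 ⟨k, h⟩ = false) :
    gval p k = ((p.1 ⟨k, h⟩ : ℕ) : ℤ) + 1 := by
  rw [gval_def p h, hb]
  simp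

lemma gval_inj (p : SP n) {k k' : ℕ} (hk : k < n) (hk' : k' < n)
    (h : gval p k = gval p k') : k = k' := by
  have h1 : |gval p k| = |gval p k'| := by rw [h]
  rw [gval_abs p hk, gval_abs p hk'] at h1
  have h2 : p.1 ⟨k, hk⟩ = p.1 ⟨k', hk'⟩ := by
    apply Fin.ext
    omega
  have := p.1.injective h2
  exact congrArg Fin.val this

-- zero prefix

lemma adm_zero_pos {p : SP n} {l : Fin n → Fin (m + 1)} (hl : adm p l) {k : ℕ} (hk : k < n)
    (h0 : Lam l (k + 1) = 0) : ∀ j, j ≤ k → 0 < aval p (j + 1) := by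
  intro j
  induction j with
  | zero =>
    intro _
    have hlam : Lam l 1 = 0 := by
      have := adm_mono hl (show 1 ≤ k + 1 by omega) (by omega)
      omega
    have hnd : ¬ desc p 0 := by
      intro hd
      have h5 := (hl 0 (by omega)).2 hd
      rw [Lam_zero] at h5
      simp only [Nat.zero_add] at h5
      omega
    unfold desc at hnd
    have hne : aval p 1 ≠ 0 := by
      have : aval p 1 = gval p 0 := by simp [aval]
      rw [this]
      exact gval_ne_zero p (by omega)
    simp [aval] at hnd hne ⊢
    omega
  | succ j ih =>
    intro hjk
    have hpos := ih (by omega)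
    have hnd : ¬ desc p (j + 1) := by
      intro hd
      have := (hl (j + 1) (by omega)).2 hd
      have hz : Lam l (j + 1 + 1) = 0 := by
        have := adm_mono hl (show j + 1 + 1 ≤ k + 1 by omega) (by omega)
        omega
      omega
    unfold desc at hnd
    omega

lemma adm_zero_sign {p : SP n} {l : Fin n → Fin (m + 1)} (hl : adm p l) {k : ℕ} (hk : k < n)
    (h0 : (l ⟨k, hk⟩ : ℕ) = 0) : p.2 ⟨k, hk⟩ = false := by
  have h1 : Lam l (k + 1) = 0 := by rw [Lam_succ l hk]; exact h0
  have h2 := adm_zero_pos hl hk h1 k le_rfl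
  have h3 : aval p (k + 1) = gval p k := by simp [aval]
  rw [h3] at h2
  have := (gval_neg_iff p hk)
  rcases Bool.eq_false_or_eq_true (p.2 ⟨k, hk⟩) with hb | hb
  · exfalso; have := this.mpr hb; omega
  · exact hb

-- strict mono helpers

lemma strictMono_of_adj {α : Type*} [Preorder α] {f : Fin n → α}
    (h : ∀ k (hk : k + 1 < n), f ⟨k, Nat.lt_of_succ_lt hk⟩ < f ⟨k + 1, hk⟩) :
    StrictMono f := by
  have key : ∀ b (hb : b < n) (a) (ha : a < n), a < b → f ⟨a, ha⟩ < f ⟨b, hb⟩ := by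
    intro b
    induction b with
    | zero => omega
    | succ b ih =>
      intro hb a ha hab
      rcases Nat.lt_or_ge a b with h' | h'
      · exact lt_trans (ih (by omega) a ha h') (h b hb)
      · have : a = b := by omega
        subst this
        exact h a hb
  intro x y hxy
  have := key y.val y.2 x.val x.2 hxy
  simpa using this

lemma strictMono_gap {f : Fin n → ℕ} (hf : StrictMono f) :
    ∀ (b : ℕ) (hb : b < n) (a : ℕ) (ha : a < n), a ≤ b → f ⟨a, ha⟩ + (b - a) ≤ f ⟨b, hb⟩ := by
  intro b
  induction b with
  | zero =>
    intro hb a ha hab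
    have : a = 0 := by omega
    subst this
    simp
  | succ b ih =>
    intro hb a ha hab
    rcases Nat.lt_or_ge a (b + 1) with h' | h'
    · have h1 := ih (by omega) a ha (by omega)
      have h2 : f ⟨b, by omega⟩ < f ⟨b + 1, hb⟩ := hf (by simp [Fin.lt_def])
      omega
    · have : a = b + 1 := by omega
      subst this
      simp

-- admissible set and its cardinality

def admSet (p : SP n) (m : ℕ) : Finset (Fin n → Fin (m + 1)) :=
  univ.filter (fun l => adm p l)

def nfun (p : SP n) (l : Fin n → Fin (m + 1)) (j : Fin n) : ℕ :=
  Lam l (j.val + 1) + (j.val + 1) - cfun p j.val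

lemma nfun_strictMono {p : SP n} {l : Fin n → Fin (m + 1)} (hl : adm p l) :
    StrictMono (nfun p l) := by
  apply strictMono_of_adj
  intro k hk
  unfold nfun
  simp only
  have a1 := cfun_succ p k
  have a2 := adm_cfun_le hl k (by omega)
  have a3 := (hl (k + 1) hk).1
  have a4 := cfun_le p k
  by_cases hd : desc p (k + 1)
  · have a5 := (hl (k + 1) hk).2 hd
    rw [if_pos hd] at a1
    omega
  · rw [if_neg hd] at a1
    omega

lemma nfun_mem {p : SP n} {l : Fin n → Fin (m + 1)} (hl : adm p l) (j : Fin n) :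
    nfun p l j ∈ Icc 1 (n + m - dnum p) := by
  unfold nfun
  have a1 := adm_cfun_le hl j.val j.2
  have a2 := cfun_le p j.val
  have a3 := cfun_le_dnum p j.2
  have a4 := dnum_le_cfun p j.2
  have a5 := dnum_le_n p
  have a6 := Lam_le_m l (j.val + 1)
  have a7 := j.2
  rw [mem_Icc]
  omega

def enum (s : Finset ℕ) (j : ℕ) : ℕ := (s.sort (· ≤ ·)).getD j 0

lemma enum_eq {s : Finset ℕ} (h : s.card = n) (j : Fin n) :
    enum s j.val = s.orderEmbOfFin h j := by
  rw [Finset.orderEmbOfFin_apply, enum, List.getD_eq_getElem _ _ (by rw [Finset.length_sort, h]; exact j.2)]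
  simp [Fin.getElem_fin]

def bwd (p : SP n) (m : ℕ) (s : Finset ℕ) : Fin n → Fin (m + 1) :=
  fun j => ⟨min m (enum s j.val + cfun p j.val - (j.val + 1)), by omega⟩

lemma orderEmb_facts (p : SP n) (m : ℕ) (s : Finset ℕ)
    (hs : s ∈ powersetCard n (Icc 1 (n + m - dnum p))) (j : Fin n) :
    j.val + 1 ≤ enum s j.val ∧
      enum s j.val + (n - 1 - j.val) ≤ n + m - dnum p := by
  have hsub := (mem_powersetCard.mp hs).1
  have hcard := (mem_powersetCard.mp hs).2
  have h1 : s.orderEmbOfFin hcard j ∈ Icc 1 (n + m - dnum p) :=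
    hsub (Finset.orderEmbOfFin_mem s hcard j)
  have hlast : (n - 1 : ℕ) < n := by have := j.2; omega
  have h0 : (0 : ℕ) < n := by have := j.2; omega
  have h2 : s.orderEmbOfFin hcard ⟨n - 1, hlast⟩ ∈ Icc 1 (n + m - dnum p) :=
    hsub (Finset.orderEmbOfFin_mem s hcard _)
  have h2' : s.orderEmbOfFin hcard ⟨0, h0⟩ ∈ Icc 1 (n + m - dnum p) :=
    hsub (Finset.orderEmbOfFin_mem s hcard _)
  have h3 := strictMono_gap (s.orderEmbOfFin hcard).strictMono (n - 1) hlast j.val j.2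
    (by have := j.2; omega)
  have h4 := strictMono_gap (s.orderEmbOfFin hcard).strictMono j.val j.2 0 h0 (by omega)
  rw [mem_Icc] at h1 h2 h2'
  simp only [Fin.eta] at h3 h4
  rw [enum_eq hcard j]
  have hj := j.2
  constructor
  · omega
  · omega

lemma enum_adj (p : SP n) (m : ℕ) (s : Finset ℕ)
    (hs : s ∈ powersetCard n (Icc 1 (n + m - dnum p))) {k : ℕ} (hk : k + 1 < n) :
    enum s k < enum s (k + 1) := by
  have hcard := (mem_powersetCard.mp hs).2
  rw [enum_eq hcard ⟨k, by omega⟩, enum_eq hcard ⟨k + 1, hk⟩]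
  exact (s.orderEmbOfFin hcard).strictMono (by simp [Fin.lt_def])

lemma bwd_eval (p : SP n) (m : ℕ) (s : Finset ℕ)
    (hs : s ∈ powersetCard n (Icc 1 (n + m - dnum p))) (j : Fin n) :
    (bwd p m s j : ℕ) = enum s j.val + cfun p j.val - (j.val + 1) := by
  have h1 := orderEmb_facts p m s hs j
  have h4 := cfun_le_dnum p j.2
  have h5 := dnum_le_n p
  have hj := j.2
  show min m _ = _
  omega

lemma bwd_adm (p : SP n) (m : ℕ) (s : Finset ℕ)
    (hs : s ∈ powersetCard n (Icc 1 (n + m - dnum p))) : adm p (bwd p m s) := by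
  intro k hk
  match k with
  | 0 =>
    rw [Lam_zero, Lam_succ _ hk]
    constructor
    · omega
    · intro hd
      have h1 := bwd_eval p m s hs ⟨0, hk⟩
      have h2 := orderEmb_facts p m s hs ⟨0, hk⟩
      have hc0 : cfun p 0 = 1 := by rw [cfun_zero, if_pos hd]
      simp only at h1 h2
      omega
  | (k' + 1) =>
    have hk' : k' < n := by omega
    rw [Lam_succ _ hk', Lam_succ _ hk]
    have h1 := bwd_eval p m s hs ⟨k', hk'⟩
    have h2 := bwd_eval p m s hs ⟨k' + 1, hk⟩
    have h3 := orderEmb_facts p m s hs ⟨k', hk'⟩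
    have h4 := orderEmb_facts p m s hs ⟨k' + 1, hk⟩
    have h5 := enum_adj p m s hs hk
    have h6 := cfun_succ p k'
    simp only at h1 h2 h3 h4
    by_cases hd : desc p (k' + 1)
    · rw [if_pos hd] at h6
      constructor
      · omega
      · intro _; omega
    · rw [if_neg hd] at h6
      constructor
      · omega
      · intro hd'; exact absurd hd' hd

lemma card_admSet (p : SP n) (m : ℕ) :
    (admSet p m).card = (n + m - dnum p).choose n := by
  have hIcc : (Icc 1 (n + m - dnum p)).card = n + m - dnum p := by
    rw [Nat.card_Icc]; omega
  rw [← hIcc, ← Finset.card_powersetCard]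
  have hmemP : ∀ l : Fin n → Fin (m + 1), adm p l →
      image (nfun p l) univ ∈ powersetCard n (Icc 1 (n + m - dnum p)) := by
    intro l hadm
    rw [mem_powersetCard]
    constructor
    · intro x hx
      rw [mem_image] at hx
      obtain ⟨j, _, rfl⟩ := hx
      exact nfun_mem hadm j
    · rw [Finset.card_image_of_injective _ (nfun_strictMono hadm).injective]
      simp
  refine Finset.card_bij' (fun l _ => image (nfun p l) univ) (fun s _ => bwd p m s)
    ?_ ?_ ?_ ?_
  · intro l hl
    exact hmemP l (mem_filter.mp hl).2
  · intro s hs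
    exact mem_filter.mpr ⟨mem_univ _, bwd_adm p m s hs⟩
  · intro l hl
    have hadm : adm p l := (mem_filter.mp hl).2
    have hs := hmemP l hadm
    have hcard := (mem_powersetCard.mp hs).2
    have huniq : (fun j => nfun p l j) = ⇑((image (nfun p l) univ).orderEmbOfFin hcard) :=
      Finset.orderEmbOfFin_unique _ (fun x => mem_image_of_mem (nfun p l) (mem_univ x))
        (nfun_strictMono hadm)
    funext j
    apply Fin.ext
    have h1 := bwd_eval p m (image (nfun p l) univ) hs j
    have h2 : enum (image (nfun p l) univ) j.val = nfun p l j := by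
      rw [enum_eq hcard j, ← huniq]
    rw [h1, h2]
    unfold nfun
    have a1 := adm_cfun_le hadm j.val j.2
    have a2 := cfun_le p j.val
    have hLam : Lam l (j.val + 1) = (l j : ℕ) := by
      rw [Lam_succ l j.2]
    omega
  · intro s hs
    have hcard := (mem_powersetCard.mp hs).2
    have heq : ∀ j : Fin n, nfun p (bwd p m s) j = enum s j.val := by
      intro j
      unfold nfun
      have h1 := bwd_eval p m s hs j
      have hLam : Lam (bwd p m s) (j.val + 1) = (bwd p m s j : ℕ) := by
        rw [Lam_succ _ j.2]
      have h3 := orderEmb_facts p m s hs j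
      have a2 := cfun_le p j.val
      omega
    show image (nfun p (bwd p m s)) univ = s
    rw [Finset.image_congr (fun j _ => heq j)]
    have : image (fun j : Fin n => enum s j.val) univ
        = image (⇑(s.orderEmbOfFin hcard)) univ := by
      apply Finset.image_congr
      intro j _
      exact enum_eq hcard j
    rw [this]
    apply Finset.coe_injective
    rw [coe_image, coe_univ, Set.image_univ, range_orderEmbOfFin]

-- global bijection

def vf (f : Fin n → Fin (2 * m + 1)) (i : Fin n) : ℤ := ((f i : ℕ) : ℤ) - (m : ℤ)

lemma vf_bound (f : Fin n → Fin (2 * m + 1)) (i : Fin n) :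
    -(m : ℤ) ≤ vf f i ∧ vf f i ≤ (m : ℤ) := by
  have := (f i).2
  unfold vf
  omega

def tb (f : Fin n → Fin (2 * m + 1)) (i : Fin n) : ℤ :=
  if vf f i < 0 then (n : ℤ) - (i : ℕ) else (n : ℤ) + 1 + (i : ℕ)

lemma tb_bound (f : Fin n → Fin (2 * m + 1)) (i : Fin n) :
    1 ≤ tb f i ∧ tb f i ≤ 2 * n := by
  unfold tb
  have hi := i.2
  split <;> omega

def kap (f : Fin n → Fin (2 * m + 1)) (i : Fin n) : ℤ :=
  (2 * n + 1) * |vf f i| + tb f i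

lemma kap_inj (f : Fin n → Fin (2 * m + 1)) : Function.Injective (kap f) := by
  intro i j h
  unfold kap at h
  have h1 := tb_bound (m := m) f i
  have h2 := tb_bound (m := m) f j
  have key : ∀ x y tx ty : ℤ, (2 * n + 1) * x + tx = (2 * n + 1) * y + ty →
      1 ≤ tx → tx ≤ 2 * n → 1 ≤ ty → ty ≤ 2 * n → 0 ≤ x → 0 ≤ y → x = y ∧ tx = ty := by
    intro x y tx ty hh h1 h2 h3 h4 hx hy
    rcases lt_trichotomy x y with hlt | he | hgt
    · exfalso
      have hm : (2 * (n : ℤ) + 1) * 1 ≤ (2 * n + 1) * (y - x) :=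
        mul_le_mul_of_nonneg_left (by omega) (by positivity)
      nlinarith
    · constructor
      · exact he
      · rw [he] at hh; linarith
    · exfalso
      have hm : (2 * (n : ℤ) + 1) * 1 ≤ (2 * n + 1) * (x - y) :=
        mul_le_mul_of_nonneg_left (by omega) (by positivity)
      nlinarith
  have h3 := key _ _ _ _ h h1.1 h1.2 h2.1 h2.2 (abs_nonneg _) (abs_nonneg _)
  have h4 := h3.2
  unfold tb at h4
  have hi := i.2
  have hj := j.2
  apply Fin.ext
  split at h4 <;> split at h4 <;> omega

def Phi (f : Fin n → Fin (2 * m + 1)) : SP n :=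
  (Tuple.sort (kap f), fun j => decide (vf f (Tuple.sort (kap f) j) < 0))

lemma Phi_strictMono (f : Fin n → Fin (2 * m + 1)) (p : SP n) (hf : Phi f = p) :
    StrictMono (fun j => kap f (p.1 j)) := by
  have h1 : p.1 = Tuple.sort (kap f) := by rw [← hf]; rfl
  rw [h1]
  have h2 : Monotone (kap f ∘ Tuple.sort (kap f)) := Tuple.monotone_sort (kap f)
  exact h2.strictMono_of_injective ((kap_inj f).comp (Tuple.sort (kap f)).injective)

lemma Phi_sign (f : Fin n → Fin (2 * m + 1)) (p : SP n) (hf : Phi f = p) (j : Fin n) :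
    p.2 j = decide (vf f (p.1 j) < 0) := by
  have h1 : p.1 = Tuple.sort (kap f) := by rw [← hf]; rfl
  have h2 : p.2 = fun j => decide (vf f (Tuple.sort (kap f) j) < 0) := by rw [← hf]; rfl
  rw [h1, h2]

def Tm (p : SP n) (f : Fin n → Fin (2 * m + 1)) : Fin n → Fin (m + 1) :=
  fun j => ⟨(|vf f (p.1 j)|).toNat, by
    have h := vf_bound f (p.1 j)
    have : |vf f (p.1 j)| ≤ (m : ℤ) := abs_le.mpr ⟨h.1, h.2⟩
    have h0 := abs_nonneg (vf f (p.1 j))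
    omega⟩

def Um (p : SP n) (l : Fin n → Fin (m + 1)) : Fin n → Fin (2 * m + 1) :=
  fun i => ⟨((if p.2 (p.1⁻¹ i) then (-1 : ℤ) else 1) * ((l (p.1⁻¹ i) : ℕ) : ℤ)
      + (m : ℤ)).toNat, by
    have h := Nat.lt_succ_iff.mp (l (p.1⁻¹ i)).2
    split <;> omega⟩

lemma vf_Um (p : SP n) (l : Fin n → Fin (m + 1)) (i : Fin n) :
    vf (Um p l) i = (if p.2 (p.1⁻¹ i) then (-1 : ℤ) else 1) * ((l (p.1⁻¹ i) : ℕ) : ℤ) := by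
  unfold vf Um
  have h := Nat.lt_succ_iff.mp (l (p.1⁻¹ i)).2
  simp only
  split <;> omega

lemma vf_Um_apply (p : SP n) (l : Fin n → Fin (m + 1)) (j : Fin n) :
    vf (Um p l) (p.1 j) = (if p.2 j then (-1 : ℤ) else 1) * ((l j : ℕ) : ℤ) := by
  rw [vf_Um]
  rw [show p.1⁻¹ (p.1 j) = j from Equiv.symm_apply_apply p.1 j]

lemma Tm_val (p : SP n) (f : Fin n → Fin (2 * m + 1)) (j : Fin n) :
    (Tm p f j : ℕ) = (|vf f (p.1 j)|).toNat := rfl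

lemma adm_Tm {p : SP n} {f : Fin n → Fin (2 * m + 1)} (hf : Phi f = p) : adm p (Tm p f) := by
  have hS := Phi_strictMono f p hf
  intro k hk
  match k with
  | 0 =>
    rw [Lam_zero, Lam_succ _ hk]
    refine ⟨by omega, ?_⟩
    intro hd
    simp only [desc, aval] at hd
    norm_num at hd
    -- hd : gval p 0 < 0
    have hb := (gval_neg_iff p hk).mp hd
    have hb2 := Phi_sign f p hf ⟨0, hk⟩
    rw [hb2] at hb
    have hv : vf f (p.1 ⟨0, hk⟩) < 0 := of_decide_eq_true hb
    rw [Tm_val]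
    have h1 : 1 ≤ |vf f (p.1 ⟨0, hk⟩)| := by rw [abs_of_neg hv]; omega
    omega
  | (k' + 1) =>
    have hk' : k' < n := by omega
    rw [Lam_succ _ hk', Lam_succ _ hk, Tm_val, Tm_val]
    have hab : (⟨k', hk'⟩ : Fin n) < ⟨k' + 1, hk⟩ := by simp [Fin.lt_def]
    have hklt := hS hab
    simp only [kap] at hklt
    have t1 := tb_bound f (p.1 ⟨k', hk'⟩)
    have t2 := tb_bound f (p.1 ⟨k' + 1, hk⟩)
    have habs : |vf f (p.1 ⟨k', hk'⟩)| ≤ |vf f (p.1 ⟨k' + 1, hk⟩)| := by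
      by_contra hcon
      push_neg at hcon
      have hm : (2 * (n : ℤ) + 1) * 1
          ≤ (2 * n + 1) * (|vf f (p.1 ⟨k', hk'⟩)| - |vf f (p.1 ⟨k' + 1, hk⟩)|) :=
        mul_le_mul_of_nonneg_left (by omega) (by positivity)
      nlinarith [t1.1, t1.2, t2.1, t2.2]
    have hnn1 := abs_nonneg (vf f (p.1 ⟨k', hk'⟩))
    have hnn2 := abs_nonneg (vf f (p.1 ⟨k' + 1, hk⟩))
    refine ⟨by omega, ?_⟩
    intro hd
    rcases lt_or_eq_of_le habs with hlt | heq
    · omega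
    · exfalso
      have htb : tb f (p.1 ⟨k', hk'⟩) < tb f (p.1 ⟨k' + 1, hk⟩) := by
        rw [heq] at hklt
        omega
      have sa := Phi_sign f p hf ⟨k', hk'⟩
      have sb := Phi_sign f p hf ⟨k' + 1, hk⟩
      simp only [desc, aval] at hd
      norm_num at hd
      -- hd : gval p (k' + 1) < gval p k'
      have hva1 := (p.1 ⟨k', hk'⟩).2
      have hvb1 := (p.1 ⟨k' + 1, hk⟩).2
      simp only [tb] at htb
      by_cases hva : vf f (p.1 ⟨k', hk'⟩) < 0 <;>
          by_cases hvb : vf f (p.1 ⟨k' + 1, hk⟩) < 0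
      · rw [decide_eq_true hva] at sa
        rw [decide_eq_true hvb] at sb
        rw [gval_of_true p hk' sa, gval_of_true p hk sb] at hd
        rw [if_pos hva, if_pos hvb] at htb
        omega
      · rw [decide_eq_true hva] at sa
        rw [decide_eq_false hvb] at sb
        rw [gval_of_true p hk' sa, gval_of_false p hk sb] at hd
        omega
      · rw [decide_eq_false hva] at sa
        rw [decide_eq_true hvb] at sb
        rw [if_neg hva, if_pos hvb] at htb
        omega
      · rw [decide_eq_false hva] at sa
        rw [decide_eq_false hvb] at sb
        rw [gval_of_false p hk' sa, gval_of_false p hk sb] at hd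
        rw [if_neg hva, if_neg hvb] at htb
        omega

lemma Phi_Um {p : SP n} {l : Fin n → Fin (m + 1)} (hl : adm p l) : Phi (Um p l) = p := by
  have habs : ∀ j : Fin n, |vf (Um p l) (p.1 j)| = ((l j : ℕ) : ℤ) := by
    intro j
    rw [vf_Um_apply]
    split
    · rw [neg_one_mul, abs_neg, abs_of_nonneg (by positivity)]
    · rw [one_mul, abs_of_nonneg (by positivity)]
  have hzs : ∀ j : Fin n, (l j : ℕ) = 0 → p.2 j = false := by
    intro j hj0
    have := adm_zero_sign hl j.2 (by simpa using hj0)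
    simpa using this
  have hS : StrictMono (fun j : Fin n => kap (Um p l) (p.1 j)) := by
    apply strictMono_of_adj
    intro k hk
    have hk' : k < n := Nat.lt_of_succ_lt hk
    show kap (Um p l) (p.1 ⟨k, hk'⟩) < kap (Um p l) (p.1 ⟨k + 1, hk⟩)
    simp only [kap]
    rw [habs ⟨k, hk'⟩, habs ⟨k + 1, hk⟩]
    have h1 := (hl (k + 1) hk).1
    rw [Lam_succ _ hk', Lam_succ _ hk] at h1
    have hva1 := (p.1 ⟨k, hk'⟩).2
    have hvb1 := (p.1 ⟨k + 1, hk⟩).2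
    rcases lt_or_eq_of_le h1 with hlt | heq
    · have hm : (2 * (n : ℤ) + 1) * (((l ⟨k, hk'⟩ : ℕ) : ℤ) + 1)
          ≤ (2 * n + 1) * ((l ⟨k + 1, hk⟩ : ℕ) : ℤ) :=
        mul_le_mul_of_nonneg_left (by push_cast; omega) (by positivity)
      have tb1 := tb_bound (Um p l) (p.1 ⟨k, hk'⟩)
      have tb2 := tb_bound (Um p l) (p.1 ⟨k + 1, hk⟩)
      nlinarith [tb1.1, tb1.2, tb2.1, tb2.2]
    · have hnd : ¬ desc p (k + 1) := by
        intro hd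
        have h2 := (hl (k + 1) hk).2 hd
        rw [Lam_succ _ hk', Lam_succ _ hk] at h2
        omega
      have hcast : ((l ⟨k, hk'⟩ : ℕ) : ℤ) = ((l ⟨k + 1, hk⟩ : ℕ) : ℤ) := by exact_mod_cast heq
      have hne : gval p k ≠ gval p (k + 1) := by
        intro hg
        have := gval_inj p hk' hk hg
        omega
      simp only [desc, aval] at hnd
      norm_num at hnd
      have hlt2 : gval p k < gval p (k + 1) := by omega
      have hvA := vf_Um_apply p l ⟨k, hk'⟩
      have hvB := vf_Um_apply p l ⟨k + 1, hk⟩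
      by_cases h0 : (l ⟨k, hk'⟩ : ℕ) = 0
      · have p2a : p.2 ⟨k, hk'⟩ = false := hzs _ h0
        have p2b : p.2 ⟨k + 1, hk⟩ = false := hzs _ (by omega)
        rw [gval_of_false p hk' p2a, gval_of_false p hk p2b] at hlt2
        rw [p2a] at hvA
        rw [p2b] at hvB
        norm_num at hvA hvB
        have hva : ¬ (vf (Um p l) (p.1 ⟨k, hk'⟩) < 0) := by rw [hvA]; omega
        have hvb : ¬ (vf (Um p l) (p.1 ⟨k + 1, hk⟩) < 0) := by rw [hvB]; omega
        simp only [tb, if_neg hva, if_neg hvb]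
        rw [hcast]
        omega
      · rcases Bool.eq_false_or_eq_true (p.2 ⟨k, hk'⟩) with pa | pa <;>
            rcases Bool.eq_false_or_eq_true (p.2 ⟨k + 1, hk⟩) with pb | pb
        · rw [gval_of_true p hk' pa, gval_of_true p hk pb] at hlt2
          rw [pa] at hvA
          rw [pb] at hvB
          norm_num at hvA hvB
          have hva : vf (Um p l) (p.1 ⟨k, hk'⟩) < 0 := by rw [hvA]; omega
          have hvb : vf (Um p l) (p.1 ⟨k + 1, hk⟩) < 0 := by rw [hvB]; omega
          simp only [tb, if_pos hva, if_pos hvb]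
          rw [hcast]
          omega
        · rw [gval_of_true p hk' pa, gval_of_false p hk pb] at hlt2
          rw [pa] at hvA
          rw [pb] at hvB
          norm_num at hvA hvB
          have hva : vf (Um p l) (p.1 ⟨k, hk'⟩) < 0 := by rw [hvA]; omega
          have hvb : ¬ (vf (Um p l) (p.1 ⟨k + 1, hk⟩) < 0) := by rw [hvB]; omega
          simp only [tb, if_pos hva, if_neg hvb]
          rw [hcast]
          omega
        · rw [gval_of_false p hk' pa, gval_of_true p hk pb] at hlt2
          exfalso
          have c1 := (p.1 ⟨k, hk'⟩).2
          omega
        · rw [gval_of_false p hk' pa, gval_of_false p hk pb] at hlt2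
          rw [pa] at hvA
          rw [pb] at hvB
          norm_num at hvA hvB
          have hva : ¬ (vf (Um p l) (p.1 ⟨k, hk'⟩) < 0) := by rw [hvA]; omega
          have hvb : ¬ (vf (Um p l) (p.1 ⟨k + 1, hk⟩) < 0) := by rw [hvB]; omega
          simp only [tb, if_neg hva, if_neg hvb]
          rw [hcast]
          omega
  have hfst : Tuple.sort (kap (Um p l)) = p.1 := by
    symm
    rw [Tuple.eq_sort_iff]
    constructor
    · exact hS.monotone
    · intro i j hij heq
      exact absurd heq (ne_of_lt (hS hij))
  have hsnd : (fun j => decide (vf (Um p l) (Tuple.sort (kap (Um p l)) j) < 0)) = p.2 := by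
    funext j
    rw [hfst]
    rcases Bool.eq_false_or_eq_true (p.2 j) with hb | hb <;> rw [hb]
    · have h1 : 1 ≤ (l j : ℕ) := by
        by_contra hcon
        have := hzs j (by omega)
        rw [hb] at this
        exact absurd this (by simp)
      rw [vf_Um_apply, hb]
      refine decide_eq_true ?_
      rw [if_pos rfl]
      omega
    · rw [vf_Um_apply, hb]
      refine decide_eq_false ?_
      rw [if_neg (by simp)]
      omega
  show (Tuple.sort (kap (Um p l)),
    fun j => decide (vf (Um p l) (Tuple.sort (kap (Um p l)) j) < 0)) = p
  rw [hsnd, hfst]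

lemma Tm_Um {p : SP n} {l : Fin n → Fin (m + 1)} (hl : adm p l) : Tm p (Um p l) = l := by
  funext j
  apply Fin.ext
  rw [Tm_val]
  have habs : |vf (Um p l) (p.1 j)| = ((l j : ℕ) : ℤ) := by
    rw [vf_Um_apply]
    split
    · rw [neg_one_mul, abs_neg, abs_of_nonneg (by positivity)]
    · rw [one_mul, abs_of_nonneg (by positivity)]
  rw [habs]
  simp

lemma Um_Tm {p : SP n} {f : Fin n → Fin (2 * m + 1)} (hf : Phi f = p) : Um p (Tm p f) = f := by
  funext i
  apply Fin.ext
  have hsgn := Phi_sign f p hf (p.1⁻¹ i)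
  rw [show p.1 (p.1⁻¹ i) = i from Equiv.apply_symm_apply p.1 i] at hsgn
  have hv : vf f i = ((f i : ℕ) : ℤ) - (m : ℤ) := rfl
  have hb := (f i).2
  show (((if p.2 (p.1⁻¹ i) then (-1 : ℤ) else 1) * ((Tm p f (p.1⁻¹ i) : ℕ) : ℤ)
      + (m : ℤ)).toNat) = (f i : ℕ)
  rw [Tm_val]
  rw [show p.1 (p.1⁻¹ i) = i from Equiv.apply_symm_apply p.1 i]
  rw [hsgn]
  by_cases hvn : vf f i < 0
  · rw [abs_of_neg hvn, if_pos (decide_eq_true hvn)]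
    omega
  · rw [abs_of_nonneg (by omega),
      if_neg (by rw [decide_eq_false hvn]; exact Bool.false_ne_true)]
    omega

lemma fiber_card (p : SP n) (m : ℕ) :
    ((univ : Finset (Fin n → Fin (2 * m + 1))).filter (fun f => Phi f = p)).card
      = (admSet p m).card := by
  refine Finset.card_bij' (fun f _ => Tm p f) (fun l _ => Um p l) ?_ ?_ ?_ ?_
  · intro f hf
    exact mem_filter.mpr ⟨mem_univ _, adm_Tm (mem_filter.mp hf).2⟩
  · intro l hl
    exact mem_filter.mpr ⟨mem_univ _, Phi_Um (mem_filter.mp hl).2⟩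
  · intro f hf
    exact Um_Tm (mem_filter.mp hf).2
  · intro l hl
    exact Tm_Um (mem_filter.mp hl).2

lemma countB (n m : ℕ) : ∑ p : SP n, (n + m - dnum p).choose n = (2 * m + 1) ^ n := by
  have h1 : ((univ : Finset (Fin n → Fin (2 * m + 1)))).card
      = ∑ p ∈ (univ : Finset (SP n)), ((univ : Finset (Fin n → Fin (2 * m + 1))).filter
          (fun f => Phi f = p)).card :=
    Finset.card_eq_sum_card_fiberwise (fun f _ => mem_univ (Phi f))
  rw [card_univ, Fintype.card_fun, Fintype.card_fin, Fintype.card_fin] at h1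
  rw [h1]
  symm
  apply Finset.sum_congr rfl
  intro p _
  rw [fiber_card p m, card_admSet p m]

-- final assembly

lemma coeff_B (j : ℕ) :
    (PowerSeries.coeff j) ((BpolyTotal n : Polynomial ℚ) : PowerSeries ℚ)
      = ∑ p : SP n, (if j = desB p then (1 : ℚ) else 0) := by
  rw [Polynomial.coeff_coe]
  unfold BpolyTotal
  rw [Polynomial.finset_sum_coeff]
  apply Finset.sum_congr rfl
  intro p _
  rw [Polynomial.coeff_X_pow]

lemma innerSumB (hn : 1 ≤ n) (k d : ℕ) :
    (∑ x ∈ Finset.HasAntidiagonal.antidiagonal k, ((n + x.1).choose n : ℚ) * (if x.2 = d then 1 else 0))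
      = ((n + k - d).choose n : ℚ) := by
  by_cases hdk : d ≤ k
  · rw [Finset.sum_eq_single (k - d, d)]
    · rw [if_pos rfl, mul_one]
      congr 2
      omega
    · rintro ⟨b1, b2⟩ hb hne
      rw [Finset.HasAntidiagonal.mem_antidiagonal] at hb
      simp only at hb ⊢
      have hne2 : ¬ (b2 = d) := by
        intro hq
        exact hne (by simp only [Prod.mk.injEq]; omega)
      rw [if_neg hne2, mul_zero]
    · intro hnot
      exact absurd (Finset.HasAntidiagonal.mem_antidiagonal.mpr (by omega)) hnot
  · rw [Finset.sum_eq_zero, eq_comm]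
    · rw [Nat.choose_eq_zero_of_lt (by omega)]
      norm_num
    · intro x hx
      rw [Finset.HasAntidiagonal.mem_antidiagonal] at hx
      rw [if_neg (by omega), mul_zero]

lemma key_mul (n : ℕ) (hn : 1 ≤ n) :
    (PowerSeries.invOneSubPow ℚ (n + 1)).val * ((BpolyTotal n : Polynomial ℚ) : PowerSeries ℚ)
      = PowerSeries.mk (fun k : ℕ => ((2 * k + 1 : ℚ)) ^ n) := by
  ext k
  rw [PowerSeries.coeff_mk, PowerSeries.invOneSubPow_val_succ_eq_mk_add_choose,
    PowerSeries.coeff_mul]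
  calc
    ∑ x ∈ Finset.HasAntidiagonal.antidiagonal k,
        (PowerSeries.coeff x.1) (PowerSeries.mk fun j => ((n + j).choose n : ℚ))
          * (PowerSeries.coeff x.2) ((BpolyTotal n : Polynomial ℚ) : PowerSeries ℚ)
      = ∑ x ∈ Finset.HasAntidiagonal.antidiagonal k, ∑ p : SP n,
          ((n + x.1).choose n : ℚ) * (if x.2 = desB p then 1 else 0) := by
        apply Finset.sum_congr rfl
        intro x _
        rw [PowerSeries.coeff_mk, coeff_B, mul_sum]
    _ = ∑ p : SP n, ∑ x ∈ Finset.HasAntidiagonal.antidiagonal k,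
          ((n + x.1).choose n : ℚ) * (if x.2 = desB p then 1 else 0) := Finset.sum_comm
    _ = ∑ p : SP n, ((n + k - desB p).choose n : ℚ) := by
        apply Finset.sum_congr rfl
        intro p _
        exact innerSumB hn k (desB p)
    _ = ((2 * k + 1 : ℚ)) ^ n := by
        simp only [desB_eq_dnum]
        rw [← Nat.cast_sum, countB n k]
        push_cast
        ring

/-- Brenti's Carlitz-type identity in `ℚ[[t]]`:
`B_n(t) = (1-t)^{n+1} · ∑_{k ≥ 0} (2k+1)^n t^k`. -/
theorem stmt19 (n : ℕ) (hn : 1 ≤ n) :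
    (BpolyTotal n : PowerSeries ℚ) =
      (1 - PowerSeries.X) ^ (n + 1) *
        PowerSeries.mk (fun k : ℕ => ((2 * k + 1 : ℚ)) ^ n) := by
  have hinv : (1 - PowerSeries.X : PowerSeries ℚ) ^ (n + 1)
      = (PowerSeries.invOneSubPow ℚ (n + 1)).inv :=
    (PowerSeries.invOneSubPow_inv_eq_one_sub_pow ℚ (n + 1)).symm
  rw [hinv, ← key_mul n hn, ← mul_assoc, Units.inv_val, one_mul]
end
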